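/- arXiv:1710.07566 — 6 statements merged into one kernel-verified Lean document; each statement's English description precedes it below -/
import Mathlib

section
/- Let p ∈ (1,∞), let 0 < r < 1 and let γ satisfy r/(2p) < γ < r/p. Then the function g is smooth on ℝ × (0,∞), for all nonnegative integers k₀, k₁ the iterated derivative X₀^{k₀} X₁^{k₁} g belongs to L^p(ρ), and yet g² does not belong to L^p(ρ), i.e. ∫₀^∞ ∫_ℝ |g(x,a)|^{2p} a^{-1} dx da = ∞. (This is the concrete content of the paper's counterexample showing that on the ax+b group the Sobolev space L^p_k is not an algebra under pointwise multiplication for any positive integer k.) -/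
open MeasureTheory Set

noncomputable section

/-- Left-invariant vector field `X₀` on the `ax+b` group: `(X₀ f)(x,a) = a ∂f/∂a (x,a)`. -/
def X0 (f : ℝ → ℝ → ℝ) : ℝ → ℝ → ℝ := fun x a => a * deriv (fun b => f x b) a

/-- Left-invariant vector field `X₁` on the `ax+b` group: `(X₁ f)(x,a) = a ∂f/∂x (x,a)`. -/
def X1 (f : ℝ → ℝ → ℝ) : ℝ → ℝ → ℝ := fun x a => a * deriv (fun y => f y a) x

/-- Membership in `L^p(ρ)` on the `ax+b` group, where `dρ(x,a) = a⁻¹ dx da` on `ℝ × (0,∞)`. -/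
def MemLpRho (p : ℝ) (f : ℝ → ℝ → ℝ) : Prop :=
  ∫⁻ a in Set.Ioi (0 : ℝ), ∫⁻ x : ℝ, ENNReal.ofReal (|f x a| ^ p / a) < ⊤

/-!
Every `X₀^k₀ X₁^k₁ g` is a finite sum of bumps `φ(x a^{-r}) η(a) a^s` with `φ, η` smooth and
compactly supported and `s = -γ + k₁(1 - r) ≥ -γ`: `X₁` raises `s` by `1 - r` and `X₀` keeps it.
Such a bump is `O(a^s)` on the cusp `|x| ≲ a^r`, `a ≲ 1`, whose fibres have length `≍ a^r`, so
its `L^p(ρ)` norm is finite as soon as `s p + r > 0`, which `γ < r/p` guarantees. Conversely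
`g = a^{-γ}` on a fibre of length `a^r/2` for small `a`, so the `L^{2p}(ρ)` integral of `g` dominates
`∫₀ a^{-2γp + r - 1} da = ∞`, as `γ > r/(2p)`.
-/

open scoped ContDiff Topology

def bump (r s : ℝ) (φ η : ℝ → ℝ) : ℝ → ℝ → ℝ := fun x a => φ (x * a ^ (-r)) * η a * a ^ s

lemma contDiffOn_bump {n : WithTop ℕ∞} {r s : ℝ} {φ η : ℝ → ℝ} (hφ : ContDiff ℝ n φ)
    (hη : ContDiff ℝ n η) :
    ContDiffOn ℝ n (fun q : ℝ × ℝ => bump r s φ η q.1 q.2) (univ ×ˢ Ioi 0) := by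
  intro q hq
  have hq2 : q.2 ≠ 0 := (mem_prod.mp hq).2.ne'
  have hrpow (t : ℝ) : ContDiffAt ℝ n (fun q : ℝ × ℝ => q.2 ^ t) q :=
    (Real.contDiffAt_rpow_const_of_ne hq2).comp q contDiffAt_snd
  exact (((hφ.contDiffAt.comp q (contDiffAt_fst.mul (hrpow (-r)))).mul
    (hη.contDiffAt.comp q contDiffAt_snd)).mul (hrpow s)).contDiffWithinAt

lemma X1_add {f h : ℝ → ℝ → ℝ} {x a : ℝ} (hf : DifferentiableAt ℝ (fun y => f y a) x)
    (hh : DifferentiableAt ℝ (fun y => h y a) x) :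
    X1 (fun x a => f x a + h x a) x a = X1 f x a + X1 h x a := by
  rw [X1, X1, X1, deriv_fun_add hf hh, mul_add]

lemma X0_add {f h : ℝ → ℝ → ℝ} {x a : ℝ} (hf : DifferentiableAt ℝ (fun b => f x b) a)
    (hh : DifferentiableAt ℝ (fun b => h x b) a) :
    X0 (fun x a => f x a + h x a) x a = X0 f x a + X0 h x a := by
  rw [X0, X0, X0, deriv_fun_add hf hh, mul_add]

lemma X0_congr {f h : ℝ → ℝ → ℝ} {x a : ℝ} (hfh : (fun b => f x b) =ᶠ[𝓝 a] fun b => h x b) :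
    X0 f x a = X0 h x a := by
  simp only [X0, hfh.deriv_eq]

lemma X1_bump {r s x a : ℝ} {φ η : ℝ → ℝ} (hφ : Differentiable ℝ φ) (ha : 0 < a) :
    X1 (bump r s φ η) x a = bump r (s + (1 - r)) (deriv φ) η x a := by
  have hd : HasDerivAt (fun y => bump r s φ η y a)
      (deriv φ (x * a ^ (-r)) * a ^ (-r) * η a * a ^ s) x :=
    (((hφ _).hasDerivAt.comp x (hasDerivAt_mul_const _)).mul_const _).mul_const _
  rw [X1, hd.deriv, bump, Real.rpow_add ha, Real.rpow_sub ha, Real.rpow_one, Real.rpow_neg ha.le]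
  field_simp

lemma X0_bump {r s x a : ℝ} {φ η : ℝ → ℝ} (hφ : Differentiable ℝ φ) (hη : Differentiable ℝ η)
    (ha : 0 < a) :
    X0 (bump r s φ η) x a = bump r s (fun t => -r * t * deriv φ t) η x a
      + bump r s φ (fun b => b * deriv η b) x a + bump r s φ (fun b => s * η b) x a := by
  have hd : HasDerivAt (fun b => bump r s φ η x b)
      ((deriv φ (x * a ^ (-r)) * (x * (-r * a ^ (-r - 1))) * η a
        + φ (x * a ^ (-r)) * deriv η a) * a ^ s
        + φ (x * a ^ (-r)) * η a * (s * a ^ (s - 1))) a :=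
    (((hφ _).hasDerivAt.comp a ((Real.hasDerivAt_rpow_const (Or.inl ha.ne')).const_mul x)).mul
      (hη a).hasDerivAt).mul (Real.hasDerivAt_rpow_const (Or.inl ha.ne'))
  rw [X0, hd.deriv, bump, bump, bump, Real.rpow_sub ha, Real.rpow_sub ha, Real.rpow_one]
  field_simp

inductive BumpSum (r s : ℝ) : (ℝ → ℝ → ℝ) → Prop
  | bump {φ η : ℝ → ℝ} (hφ : ContDiff ℝ ∞ φ) (hφc : HasCompactSupport φ) (hη : ContDiff ℝ ∞ η)
      (hηc : HasCompactSupport η) : BumpSum r s (bump r s φ η)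
  | add {f h : ℝ → ℝ → ℝ} : BumpSum r s f → BumpSum r s h → BumpSum r s fun x a => f x a + h x a
  | congr {f h : ℝ → ℝ → ℝ} : BumpSum r s f → (∀ x a, 0 < a → f x a = h x a) → BumpSum r s h

namespace BumpSum

variable {r s : ℝ} {f : ℝ → ℝ → ℝ}

lemma differentiableAt_x (hf : BumpSum r s f) {x a : ℝ} (ha : 0 < a) :
    DifferentiableAt ℝ (fun y => f y a) x := by
  induction hf with
  | bump hφ _ _ _ =>
    exact (((hφ.differentiable (by simp)).differentiableAt.comp x
      (differentiableAt_id.mul_const _)).mul_const _).mul_const _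
  | add _ _ ihf ihh => exact ihf.add ihh
  | congr _ hfh ih => simpa only [hfh _ a ha] using ih

lemma differentiableAt_a (hf : BumpSum r s f) {x a : ℝ} (ha : 0 < a) :
    DifferentiableAt ℝ (fun b => f x b) a := by
  induction hf with
  | bump hφ _ hη _ =>
    exact (((hφ.differentiable (by simp)).differentiableAt.comp a
      ((Real.differentiableAt_rpow_const_of_ne _ ha.ne').const_mul x)).mul
      (hη.differentiable (by simp)).differentiableAt).mul
      (Real.differentiableAt_rpow_const_of_ne _ ha.ne')
  | add _ _ ihf ihh => exact ihf.add ihh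
  | congr _ hfh ih =>
    exact ih.congr_of_eventuallyEq
      (Filter.eventually_of_mem (Ioi_mem_nhds ha) fun b hb => (hfh x b hb).symm)

lemma X1 (hf : BumpSum r s f) : BumpSum r (s + (1 - r)) (X1 f) := by
  induction hf with
  | bump hφ hφc hη hηc =>
    exact .congr (.bump (contDiff_infty_iff_deriv.mp hφ).2 hφc.deriv hη hηc)
      fun x a ha => (X1_bump (hφ.differentiable (by simp)) ha).symm
  | add hf hh ihf ihh =>
    exact .congr (ihf.add ihh) fun x a ha =>
      (X1_add (hf.differentiableAt_x ha) (hh.differentiableAt_x ha)).symm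
  | congr _ hfh ih =>
    refine .congr ih fun x a ha => ?_
    simp only [_root_.X1, funext fun y => hfh y a ha]

lemma X0 (hf : BumpSum r s f) : BumpSum r s (X0 f) := by
  induction hf with
  | @bump φ η hφ hφc hη hηc =>
    have hφ' := (contDiff_infty_iff_deriv.mp hφ).2
    have hη' := (contDiff_infty_iff_deriv.mp hη).2
    refine .congr ((((BumpSum.bump ((contDiff_const.mul contDiff_id).mul hφ')
      (hφc.deriv.mul_left (f := fun t => -r * t)) hη hηc).add
      (.bump hφ hφc (contDiff_id.mul hη') (hηc.deriv.mul_left (f := id)))).add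
      (.bump hφ hφc (contDiff_const.mul hη) (hηc.mul_left (f := fun _ => s)))))
      fun x a ha => (X0_bump (hφ.differentiable (by simp)) (hη.differentiable (by simp)) ha).symm
  | add hf hh ihf ihh =>
    exact .congr (ihf.add ihh) fun x a ha =>
      (X0_add (hf.differentiableAt_a ha) (hh.differentiableAt_a ha)).symm
  | congr _ hfh ih =>
    exact .congr ih fun x a ha =>
      X0_congr (Filter.eventually_of_mem (Ioi_mem_nhds ha) fun b hb => hfh x b hb)

lemma iterate_X1 (hf : BumpSum r s f) (k : ℕ) :
    BumpSum r (s + k * (1 - r)) (_root_.X1^[k] f) := by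
  induction k with
  | zero => simpa using hf
  | succ k ih =>
    rw [Function.iterate_succ_apply']
    convert ih.X1 using 1
    push_cast
    ring

lemma iterate_X0 (hf : BumpSum r s f) (k : ℕ) : BumpSum r s (_root_.X0^[k] f) := by
  induction k with
  | zero => exact hf
  | succ k ih => simpa only [Function.iterate_succ_apply'] using ih.X0

end BumpSum

lemma lintegral_ofReal_le_of_bounded_support {u : ℝ → ℝ} {M R : ℝ} (hM : 0 ≤ M)
    (hu : ∀ x, u x ≤ M) (hsupp : ∀ x, u x ≠ 0 → |x| ≤ R) :
    ∫⁻ x, ENNReal.ofReal (u x) ≤ ENNReal.ofReal (2 * R * M) := by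
  calc ∫⁻ x, ENNReal.ofReal (u x)
      ≤ ∫⁻ x, (Metric.closedBall (0 : ℝ) R).indicator (fun _ => ENNReal.ofReal M) x := by
        refine lintegral_mono fun x => ?_
        by_cases hx : u x = 0
        · simp [hx]
        · rw [indicator_of_mem (by simpa using hsupp x hx)]
          exact ENNReal.ofReal_le_ofReal (hu x)
    _ = ENNReal.ofReal (2 * R * M) := by
        rw [lintegral_indicator_const measurableSet_closedBall, Real.volume_closedBall,
          ← ENNReal.ofReal_mul hM, mul_comm]

def CuspDominated (r s : ℝ) (f : ℝ → ℝ → ℝ) : Prop :=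
  ∃ C A B : ℝ, 0 ≤ C ∧
    ∀ x a, 0 < a → |f x a| ≤ C * a ^ s ∧ (f x a ≠ 0 → |x| ≤ A * a ^ r ∧ a ≤ B)

namespace CuspDominated

variable {r s : ℝ} {f : ℝ → ℝ → ℝ}

lemma add {h : ℝ → ℝ → ℝ} (hf : CuspDominated r s f) (hh : CuspDominated r s h) :
    CuspDominated r s fun x a => f x a + h x a := by
  obtain ⟨C₁, A₁, B₁, hC₁, hf⟩ := hf
  obtain ⟨C₂, A₂, B₂, hC₂, hh⟩ := hh
  refine ⟨C₁ + C₂, max A₁ A₂, max B₁ B₂, add_nonneg hC₁ hC₂, fun x a ha => ⟨?_, fun hne => ?_⟩⟩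
  · calc |f x a + h x a| ≤ |f x a| + |h x a| := abs_add_le _ _
      _ ≤ (C₁ + C₂) * a ^ s := by linarith [(hf x a ha).1, (hh x a ha).1]
  · have har := (Real.rpow_pos_of_pos ha r).le
    by_cases hf0 : f x a = 0
    · obtain ⟨hx, haB⟩ := (hh x a ha).2 (by simpa [hf0] using hne)
      exact ⟨hx.trans (by gcongr; exact le_max_right _ _), haB.trans (le_max_right _ _)⟩
    · obtain ⟨hx, haB⟩ := (hf x a ha).2 hf0
      exact ⟨hx.trans (by gcongr; exact le_max_left _ _), haB.trans (le_max_left _ _)⟩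

lemma congr {h : ℝ → ℝ → ℝ} (hf : CuspDominated r s f) (hfh : ∀ x a, 0 < a → f x a = h x a) :
    CuspDominated r s h := by
  obtain ⟨C, A, B, hC, hf⟩ := hf
  exact ⟨C, A, B, hC, fun x a ha => hfh x a ha ▸ hf x a ha⟩

lemma memLpRho {p : ℝ} (hf : CuspDominated r s f) (hp : 0 < p) (hexp : 0 < s * p + r) :
    MemLpRho p f := by
  obtain ⟨C, A, B, hC, hf⟩ := hf
  set G : ℝ → ENNReal := fun a => ENNReal.ofReal (2 * A * C ^ p * a ^ (s * p + r - 1))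
  have hfiber : ∀ a ∈ Ioi (0 : ℝ),
      ∫⁻ x, ENNReal.ofReal (|f x a| ^ p / a) ≤ (Iic B).indicator G a := by
    intro a (ha : 0 < a)
    by_cases haB : a ≤ B
    · rw [indicator_of_mem (mem_Iic.mpr haB)]
      have hM : 0 ≤ (C * a ^ s) ^ p / a := by positivity
      refine (lintegral_ofReal_le_of_bounded_support hM
        (fun x => by gcongr; exact (hf x a ha).1)
        (fun x hx => ((hf x a ha).2 fun h0 => hx (by simp [h0, hp.ne'])).1)).trans_eq ?_
      simp only [G, Real.mul_rpow hC (Real.rpow_nonneg ha.le s), ← Real.rpow_mul ha.le,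
        Real.rpow_sub ha, Real.rpow_add ha, Real.rpow_one]
      ring_nf
    · have hzero : ∀ x, f x a = 0 := fun x => by_contra fun hne => haB ((hf x a ha).2 hne).2
      simp [hzero, hp.ne']
  unfold MemLpRho
  calc ∫⁻ a in Ioi 0, ∫⁻ x, ENNReal.ofReal (|f x a| ^ p / a)
      ≤ ∫⁻ a in Ioi 0, (Iic B).indicator G a := setLIntegral_mono' measurableSet_Ioi hfiber
    _ = ∫⁻ a in Ioc 0 B, G a := by
        rw [lintegral_indicator measurableSet_Iic, Measure.restrict_restrict measurableSet_Iic,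
          Iic_inter_Ioi]
    _ < ⊤ := ((intervalIntegral.intervalIntegrable_rpow' (by linarith)).1.const_mul
        (2 * A * C ^ p)).lintegral_lt_top

end CuspDominated

lemma cuspDominated_bump {r s : ℝ} {φ η : ℝ → ℝ} (hφ : Continuous φ) (hφc : HasCompactSupport φ)
    (hη : Continuous η) (hηc : HasCompactSupport η) : CuspDominated r s (bump r s φ η) := by
  obtain ⟨Cφ, hCφ⟩ := hφc.exists_bound_of_continuous hφ
  obtain ⟨Cη, hCη⟩ := hηc.exists_bound_of_continuous hη
  obtain ⟨R, -, hR⟩ := hφc.exists_pos_le_norm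
  obtain ⟨B, -, hB⟩ := hηc.exists_pos_le_norm
  have hCφ0 : 0 ≤ Cφ := (norm_nonneg _).trans (hCφ 0)
  refine ⟨Cφ * Cη, R, B, mul_nonneg hCφ0 ((norm_nonneg _).trans (hCη 0)),
    fun x a ha => ⟨?_, fun hne => ⟨?_, ?_⟩⟩⟩
  · rw [bump, abs_mul, abs_mul, abs_of_pos (Real.rpow_pos_of_pos ha s)]
    gcongr
    · exact hCφ _
    · exact hCη _
  · have hφne : φ (x * a ^ (-r)) ≠ 0 := fun h => hne (by simp [bump, h])
    have := not_le.mp (mt (hR _) hφne)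
    rw [Real.norm_eq_abs, abs_mul, abs_of_pos (Real.rpow_pos_of_pos ha _), Real.rpow_neg ha.le,
      ← div_eq_mul_inv, div_lt_iff₀ (Real.rpow_pos_of_pos ha r)] at this
    exact this.le
  · have hηne : η a ≠ 0 := fun h => hne (by simp [bump, h])
    exact (le_abs_self a).trans (not_le.mp (mt (hB a) hηne)).le

lemma BumpSum.cuspDominated {r s : ℝ} {f : ℝ → ℝ → ℝ} (hf : BumpSum r s f) :
    CuspDominated r s f := by
  induction hf with
  | bump hφ hφc hη hηc => exact cuspDominated_bump hφ.continuous hφc hη.continuous hηc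
  | add _ _ ihf ihh => exact ihf.add ihh
  | congr _ hfh ih => exact ih.congr hfh

lemma setLIntegral_Ioo_rpow_eq_top {c e : ℝ} (hc : 0 < c) (he : e ≤ -1) :
    ∫⁻ a in Ioo 0 c, ENNReal.ofReal (a ^ e) = ⊤ := by
  by_contra h
  have hmeas : AEStronglyMeasurable (fun a : ℝ => a ^ e) (volume.restrict (Ioo 0 c)) :=
    (continuousOn_id.rpow_const fun a ha => Or.inl ha.1.ne').aestronglyMeasurable measurableSet_Ioo
  have hint : IntegrableOn (fun a : ℝ => a ^ e) (Ioo 0 c) :=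
    (lintegral_ofReal_ne_top_iff_integrable hmeas ((ae_restrict_iff' measurableSet_Ioo).mpr
      (ae_of_all _ fun a ha => Real.rpow_nonneg ha.1.le e))).mp h
  exact he.not_gt ((intervalIntegral.integrableOn_Ioo_rpow_iff hc).mp hint)

/-- The bump equals `a^s` on the fibre segment `α a^r ≤ x ≤ β a^r`, of length `(β - α) a^r`. -/
lemma le_lintegral_abs_bump_rpow {r s q α β a : ℝ} {φ η : ℝ → ℝ}
    (hφ : ∀ t ∈ Icc α β, φ t = 1) (hη : η a = 1) (ha : 0 < a) :
    ENNReal.ofReal ((β - α) * a ^ (s * q + r - 1)) ≤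
      ∫⁻ x, ENNReal.ofReal (|bump r s φ η x a| ^ q / a) := by
  have har : 0 < a ^ r := Real.rpow_pos_of_pos ha r
  have hval : ∀ x ∈ Icc (α * a ^ r) (β * a ^ r),
      ENNReal.ofReal (|bump r s φ η x a| ^ q / a) = ENNReal.ofReal (a ^ (s * q) / a) := by
    intro x hx
    have hscaled : x * a ^ (-r) ∈ Icc α β := by
      rw [Real.rpow_neg ha.le, ← div_eq_mul_inv, mem_Icc, le_div_iff₀ har, div_le_iff₀ har]
      exact hx
    rw [bump, hφ _ hscaled, hη, one_mul, one_mul, abs_of_pos (Real.rpow_pos_of_pos ha s),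
      ← Real.rpow_mul ha.le]
  calc ENNReal.ofReal ((β - α) * a ^ (s * q + r - 1))
      = ENNReal.ofReal (a ^ (s * q) / a) * volume (Icc (α * a ^ r) (β * a ^ r)) := by
        rw [Real.volume_Icc, ← ENNReal.ofReal_mul (by positivity), Real.rpow_sub ha,
          Real.rpow_add ha, Real.rpow_one]
        ring_nf
    _ = ∫⁻ x in Icc (α * a ^ r) (β * a ^ r), ENNReal.ofReal (|bump r s φ η x a| ^ q / a) := by
        rw [setLIntegral_congr_fun measurableSet_Icc hval, setLIntegral_const]
    _ ≤ ∫⁻ x, ENNReal.ofReal (|bump r s φ η x a| ^ q / a) := setLIntegral_le_lintegral _ _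

lemma lintegral_abs_bump_rpow_eq_top {r s q α β δ : ℝ} {φ η : ℝ → ℝ} (hαβ : α < β) (hδ : 0 < δ)
    (hφ : ∀ t ∈ Icc α β, φ t = 1) (hη : ∀ t ∈ Ioo 0 δ, η t = 1) (hexp : s * q + r ≤ 0) :
    ∫⁻ a in Ioi 0, ∫⁻ x, ENNReal.ofReal (|bump r s φ η x a| ^ q / a) = ⊤ := by
  refine eq_top_iff.mpr ?_
  calc ⊤ = ENNReal.ofReal (β - α) * ∫⁻ a in Ioo 0 δ, ENNReal.ofReal (a ^ (s * q + r - 1)) := by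
        rw [setLIntegral_Ioo_rpow_eq_top hδ (by linarith),
          ENNReal.mul_top (ENNReal.ofReal_pos.mpr (sub_pos.mpr hαβ)).ne']
    _ = ∫⁻ a in Ioo 0 δ, ENNReal.ofReal ((β - α) * a ^ (s * q + r - 1)) := by
        rw [← lintegral_const_mul' _ _ ENNReal.ofReal_ne_top]
        refine setLIntegral_congr_fun measurableSet_Ioo fun a _ => ?_
        rw [ENNReal.ofReal_mul (sub_pos.mpr hαβ).le]
    _ ≤ ∫⁻ a in Ioo 0 δ, ∫⁻ x, ENNReal.ofReal (|bump r s φ η x a| ^ q / a) :=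
        setLIntegral_mono' measurableSet_Ioo fun a ha =>
          le_lintegral_abs_bump_rpow hφ (hη a ha) ha.1
    _ ≤ ∫⁻ a in Ioi 0, ∫⁻ x, ENNReal.ofReal (|bump r s φ η x a| ^ q / a) :=
        lintegral_mono_set Ioo_subset_Ioi_self

theorem sobolev_not_algebra_axb_general
    (p r γ : ℝ) (hp1 : 1 < p) (hr1 : r < 1)
    (hγ1 : r / (2 * p) < γ) (hγ2 : γ < r / p)
    (ψ χ : ℝ → ℝ)
    (hψ : ContDiff ℝ (⊤ : ℕ∞) ψ)
    (hψsupp : tsupport ψ ⊆ Set.Ioo 0 1)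
    (hψ1 : ∀ t ∈ Set.Icc (1/4 : ℝ) (3/4), ψ t = 1)
    (hχ : ContDiff ℝ (⊤ : ℕ∞) χ)
    (hχsupp : tsupport χ ⊆ Set.Ioo (-1 : ℝ) 1)
    (hχ1 : ∀ t ∈ Set.Icc (0 : ℝ) (1/2), χ t = 1)
    (g : ℝ → ℝ → ℝ)
    (hg : ∀ x a, g x a = ψ (x * a ^ (-r)) * χ a * a ^ (-γ)) :
    ContDiffOn ℝ (⊤ : ℕ∞) (fun q : ℝ × ℝ => g q.1 q.2) (Set.univ ×ˢ Set.Ioi 0) ∧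
    (∀ k₀ k₁ : ℕ, MemLpRho p (X0^[k₀] (X1^[k₁] g))) ∧
    (∫⁻ a in Set.Ioi (0 : ℝ), ∫⁻ x : ℝ,
        ENNReal.ofReal (|g x a| ^ (2 * p) / a)) = ⊤ := by
  obtain rfl : g = bump r (-γ) ψ χ := funext₂ hg
  have hp : 0 < p := one_pos.trans hp1
  have hcompact {u : ℝ → ℝ} {c d : ℝ} (h : tsupport u ⊆ Ioo c d) : HasCompactSupport u :=
    isCompact_Icc.of_isClosed_subset (isClosed_tsupport u) (h.trans Ioo_subset_Icc_self)
  have hbump : BumpSum r (-γ) (bump r (-γ) ψ χ) := .bump hψ (hcompact hψsupp) hχ (hcompact hχsupp)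
  refine ⟨contDiffOn_bump hψ hχ, fun k₀ k₁ => ?_, ?_⟩
  · refine ((hbump.iterate_X1 k₁).iterate_X0 k₀).cuspDominated.memLpRho hp ?_
    have hγp : γ * p < r := (lt_div_iff₀ hp).mp hγ2
    have hk : 0 ≤ k₁ * (1 - r) * p := by have := sub_pos.mpr hr1; positivity
    linarith
  · refine lintegral_abs_bump_rpow_eq_top (by norm_num) (by norm_num : (0 : ℝ) < 1 / 2) hψ1
      (fun t ht => hχ1 t (Ioo_subset_Icc_self ht)) ?_
    have := (div_lt_iff₀ (by positivity)).mp hγ1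
    linarith

theorem sobolev_not_algebra_axb
    (p r γ : ℝ) (hp1 : 1 < p) (hr0 : 0 < r) (hr1 : r < 1)
    (hγ1 : r / (2 * p) < γ) (hγ2 : γ < r / p)
    (ψ χ : ℝ → ℝ)
    (hψ : ContDiff ℝ (⊤ : ℕ∞) ψ) (hψ0 : ∀ t, 0 ≤ ψ t)
    (hψsupp : tsupport ψ ⊆ Set.Ioo 0 1)
    (hψ1 : ∀ t ∈ Set.Icc (1/4 : ℝ) (3/4), ψ t = 1)
    (hχ : ContDiff ℝ (⊤ : ℕ∞) χ) (hχ0 : ∀ t, 0 ≤ χ t)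
    (hχsupp : tsupport χ ⊆ Set.Ioo (-1 : ℝ) 1)
    (hχ1 : ∀ t ∈ Set.Icc (0 : ℝ) (1/2), χ t = 1)
    (g : ℝ → ℝ → ℝ)
    (hg : ∀ x a, g x a = ψ (x * a ^ (-r)) * χ a * a ^ (-γ)) :
    ContDiffOn ℝ (⊤ : ℕ∞) (fun q : ℝ × ℝ => g q.1 q.2) (Set.univ ×ˢ Set.Ioi 0) ∧
    (∀ k₀ k₁ : ℕ, MemLpRho p (X0^[k₀] (X1^[k₁] g))) ∧
    (∫⁻ a in Set.Ioi (0 : ℝ), ∫⁻ x : ℝ,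
        ENNReal.ofReal (|g x a| ^ (2 * p) / a)) = ⊤ :=
  sobolev_not_algebra_axb_general p r γ hp1 hr1 hγ1 hγ2 ψ χ hψ hψsupp hψ1 hχ hχsupp hχ1 g hg
end
end

section
/- For every r, γ > 0 and all nonnegative integers k₀, k₁ there exist a function ψ̃ ∈ C_c^∞(ℝ) supported in (0,1) and a function Ψ̃, smooth on ℝ × (0,∞) with compact support contained in ℝ × (0,∞), such that for all (x,a) ∈ ℝ × (0,∞): (X₀^{k₀} X₁^{k₁} g)(x,a) = ψ̃(x a^{-r}) χ(a) a^{k₁(1-r)-γ} + Ψ̃(x,a). -/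
/-!
Write `u = x a^{-r}`. Since `X₁` differentiates at fixed `a` and `∂u/∂x = a^{-r}`, it sends
`φ(u) χ(a) a^β` to `φ'(u) χ(a) a^{β+1-r}`; since `a ∂u/∂a = -r u`, `X₀` sends it to
`(β φ(u) - r u φ'(u)) χ(a) a^β + φ(u) χ'(a) a^{β+1}`. The new profiles are again smooth and
supported in `(0,1)`, and the last term lives where `u ∈ supp φ` and `1/2 ≤ a ≤ 1` (as `χ` is
constant on `[0,1/2]`), a compact subset of the half-plane. Both vector fields preserve smooth
functions with compact support in the half-plane, so the claim follows by induction, first on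
`k₁`, then on `k₀`.
-/

open MeasureTheory Set

noncomputable section

open Function Filter Topology
open scoped ContDiff

section

variable {𝕜 E F : Type*} [NontriviallyNormedField 𝕜] [NormedAddCommGroup E] [NormedSpace 𝕜 E]
  [NormedAddCommGroup F] [NormedSpace 𝕜 F]

lemma ContDiffOn.contDiff_of_tsupport_subset {n : WithTop ℕ∞} {f : E → F} {U : Set E}
    (hU : IsOpen U) (hf : ContDiffOn 𝕜 n f U) (hsupp : tsupport f ⊆ U) : ContDiff 𝕜 n f := by
  refine contDiff_iff_contDiffAt.2 fun q => ?_
  by_cases hq : q ∈ U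
  · exact hf.contDiffAt (hU.mem_nhds hq)
  · exact contDiffAt_const.congr_of_eventuallyEq
      (notMem_tsupport_iff_eventuallyEq.1 fun h => hq (hsupp h))

lemma hasDerivAt_fst_slice {f : 𝕜 × 𝕜 → F} {x a : 𝕜} (hf : DifferentiableAt 𝕜 f (x, a)) :
    HasDerivAt (fun y => f (y, a)) (fderiv 𝕜 f (x, a) (1, 0)) x :=
  hf.hasFDerivAt.comp_hasDerivAt x ((hasDerivAt_id x).prodMk (hasDerivAt_const x a))

lemma hasDerivAt_snd_slice {f : 𝕜 × 𝕜 → F} {x a : 𝕜} (hf : DifferentiableAt 𝕜 f (x, a)) :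
    HasDerivAt (fun b => f (x, b)) (fderiv 𝕜 f (x, a) (0, 1)) a :=
  hf.hasFDerivAt.comp_hasDerivAt a ((hasDerivAt_const a x).prodMk (hasDerivAt_id a))

end

namespace AxPlusB

def IsHalfPlaneBump (Ψ : ℝ → ℝ → ℝ) : Prop :=
  ContDiff ℝ ∞ (uncurry Ψ) ∧ HasCompactSupport (uncurry Ψ) ∧
    tsupport (uncurry Ψ) ⊆ univ ×ˢ Ioi 0

lemma isHalfPlaneBump_zero : IsHalfPlaneBump fun _ _ => 0 := by
  refine ⟨contDiff_const, HasCompactSupport.zero, ?_⟩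
  simp [uncurry_def, tsupport]

lemma IsHalfPlaneBump.add {Ψ₁ Ψ₂ : ℝ → ℝ → ℝ} (h₁ : IsHalfPlaneBump Ψ₁)
    (h₂ : IsHalfPlaneBump Ψ₂) : IsHalfPlaneBump fun x a => Ψ₁ x a + Ψ₂ x a :=
  ⟨h₁.1.add h₂.1, h₁.2.1.add h₂.2.1,
    (tsupport_add _ _).trans (union_subset h₁.2.2 h₂.2.2)⟩

lemma isHalfPlaneBump_of_contDiffOn {Ψ : ℝ → ℝ → ℝ} {K : Set (ℝ × ℝ)} (hK : IsCompact K)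
    (hKU : K ⊆ univ ×ˢ Ioi 0) (hΨ : ContDiffOn ℝ ∞ (uncurry Ψ) (univ ×ˢ Ioi 0))
    (hsupp : support (uncurry Ψ) ⊆ K) : IsHalfPlaneBump Ψ := by
  have hts : tsupport (uncurry Ψ) ⊆ K := closure_minimal hsupp hK.isClosed
  exact ⟨hΨ.contDiff_of_tsupport_subset (isOpen_univ.prod isOpen_Ioi) (hts.trans hKU),
    hK.of_isClosed_subset (isClosed_tsupport _) hts, hts.trans hKU⟩

namespace IsHalfPlaneBump

variable {Ψ : ℝ → ℝ → ℝ}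

lemma hasDerivAt_fst (hΨ : IsHalfPlaneBump Ψ) (x a : ℝ) :
    HasDerivAt (fun y => Ψ y a) (fderiv ℝ (uncurry Ψ) (x, a) (1, 0)) x :=
  hasDerivAt_fst_slice (hΨ.1.differentiable (by simp) _)

lemma hasDerivAt_snd (hΨ : IsHalfPlaneBump Ψ) (x a : ℝ) :
    HasDerivAt (fun b => Ψ x b) (fderiv ℝ (uncurry Ψ) (x, a) (0, 1)) a :=
  hasDerivAt_snd_slice (hΨ.1.differentiable (by simp) _)

lemma snd_mul_fderiv_apply (hΨ : IsHalfPlaneBump Ψ) (v : ℝ × ℝ) :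
    IsHalfPlaneBump fun x a => a * fderiv ℝ (uncurry Ψ) (x, a) v := by
  have hts : tsupport (fun q : ℝ × ℝ => q.2 * fderiv ℝ (uncurry Ψ) q v) ⊆
      tsupport (uncurry Ψ) := by
    refine (closure_mono fun q hq => ?_).trans (tsupport_fderiv_subset ℝ)
    contrapose! hq
    simp [notMem_support.1 hq]
  exact ⟨contDiff_snd.mul ((hΨ.1.fderiv_right le_rfl).clm_apply contDiff_const),
    hΨ.2.1.of_isClosed_subset (isClosed_tsupport _) hts, hts.trans hΨ.2.2⟩

lemma X0 (hΨ : IsHalfPlaneBump Ψ) : IsHalfPlaneBump (X0 Ψ) := by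
  have : _root_.X0 Ψ = fun x a => a * fderiv ℝ (uncurry Ψ) (x, a) (0, 1) :=
    funext₂ fun x a => congrArg (a * ·) (hΨ.hasDerivAt_snd x a).deriv
  exact this ▸ hΨ.snd_mul_fderiv_apply _

lemma X1 (hΨ : IsHalfPlaneBump Ψ) : IsHalfPlaneBump (X1 Ψ) := by
  have : _root_.X1 Ψ = fun x a => a * fderiv ℝ (uncurry Ψ) (x, a) (1, 0) :=
    funext₂ fun x a => congrArg (a * ·) (hΨ.hasDerivAt_fst x a).deriv
  exact this ▸ hΨ.snd_mul_fderiv_apply _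

end IsHalfPlaneBump

lemma isHalfPlaneBump_profile {φ η : ℝ → ℝ} (hφ : ContDiff ℝ ∞ φ) (hφc : HasCompactSupport φ)
    (hη : ContDiff ℝ ∞ η) {c d : ℝ} (hc : 0 < c) (hη_supp : ∀ a > 0, η a ≠ 0 → a ∈ Icc c d)
    (r β : ℝ) :
    IsHalfPlaneBump fun x a => if 0 < a then φ (x * a ^ (-r)) * η a * a ^ β else 0 := by
  -- on the support, `(x, a) = (u a^r, a)` with `u = x a^{-r} ∈ tsupport φ` and `a ∈ [c, d]`
  set K := (fun p : ℝ × ℝ => (p.1 * p.2 ^ r, p.2)) '' (tsupport φ ×ˢ Icc c d)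
  have hK : IsCompact K := by
    refine (hφc.prod isCompact_Icc).image_of_continuousOn ?_
    exact (continuousOn_fst.mul (continuousOn_snd.rpow_const fun p hp =>
      Or.inl (hc.trans_le hp.2.1).ne')).prodMk continuousOn_snd
  have hKU : K ⊆ univ ×ˢ Ioi 0 := by
    rintro _ ⟨p, hp, rfl⟩
    exact ⟨trivial, hc.trans_le hp.2.1⟩
  have hsmooth : ContDiffOn ℝ ∞ (fun q : ℝ × ℝ => φ (q.1 * q.2 ^ (-r)) * η q.2 * q.2 ^ β)
      (univ ×ˢ Ioi 0) := by
    have hpow (s : ℝ) : ContDiffOn ℝ ∞ (fun q : ℝ × ℝ => q.2 ^ s) (univ ×ˢ Ioi 0) :=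
      contDiffOn_snd.rpow_const_of_ne fun q hq => hq.2.ne'
    exact ((hφ.comp_contDiffOn (contDiffOn_fst.mul (hpow _))).mul
      (hη.comp contDiff_snd).contDiffOn).mul (hpow β)
  -- the `if` keeps the support in the half-plane: for `a ≤ 0`, `a ^ s` is junk, `η` arbitrary
  refine isHalfPlaneBump_of_contDiffOn hK hKU
    (hsmooth.congr fun q hq => if_pos hq.2) fun q hq => ?_
  obtain ⟨x, a⟩ := q
  simp only [mem_support, uncurry_apply_pair, ne_eq, ite_eq_right_iff, mul_eq_zero, not_forall,
    not_or] at hq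
  obtain ⟨ha, ⟨hφ0, hη0⟩, -⟩ := hq
  refine ⟨(x * a ^ (-r), a), ⟨subset_tsupport _ hφ0, hη_supp a ha hη0⟩, ?_⟩
  simp [mul_assoc, ← Real.rpow_add ha]

lemma mem_Icc_of_deriv_ne_zero {χ : ℝ → ℝ} (hχsupp : tsupport χ ⊆ Ioo (-1) 1)
    (hχ1 : ∀ t ∈ Icc (0 : ℝ) (1 / 2), χ t = 1) (a : ℝ) (ha : 0 < a) (hχ' : deriv χ a ≠ 0) :
    a ∈ Icc (1 / 2) 1 := by
  refine ⟨?_, (hχsupp (support_deriv_subset hχ')).2.le⟩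
  by_contra! h
  have hconst : χ =ᶠ[𝓝 a] fun _ => 1 :=
    eventually_of_mem (Ioo_mem_nhds ha h) fun t ht => hχ1 t (Ioo_subset_Icc_self ht)
  exact hχ' (by rw [hconst.deriv_eq, deriv_const])

lemma hasDerivAt_profile_fst {φ : ℝ → ℝ} (hφ : Differentiable ℝ φ) (χ : ℝ → ℝ) (r β x a : ℝ) :
    HasDerivAt (fun y => φ (y * a ^ (-r)) * χ a * a ^ β)
      (deriv φ (x * a ^ (-r)) * a ^ (-r) * χ a * a ^ β) x := by
  simpa using (((hφ _).hasDerivAt.comp x ((hasDerivAt_id x).mul_const (a ^ (-r)))).mul_const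
    (χ a)).mul_const (a ^ β)

lemma hasDerivAt_profile_snd {φ χ : ℝ → ℝ} (hφ : Differentiable ℝ φ) (hχ : Differentiable ℝ χ)
    (r β x : ℝ) {a : ℝ} (ha : 0 < a) :
    HasDerivAt (fun b => φ (x * b ^ (-r)) * χ b * b ^ β)
      (((β * φ (x * a ^ (-r)) - r * (x * a ^ (-r)) * deriv φ (x * a ^ (-r))) * χ a * a ^ β
        + φ (x * a ^ (-r)) * deriv χ a * a ^ (β + 1)) / a) a := by
  have hpow (s : ℝ) : HasDerivAt (fun b : ℝ => b ^ s) (s * a ^ (s - 1)) a :=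
    Real.hasDerivAt_rpow_const (Or.inl ha.ne')
  refine ((((hφ _).hasDerivAt.comp a ((hpow (-r)).const_mul x)).mul (hχ a).hasDerivAt).mul
    (hpow β)).congr_deriv ?_
  simp only [comp_apply, Pi.mul_apply]
  rw [Real.rpow_sub_one ha.ne', Real.rpow_sub_one ha.ne', Real.rpow_add_one ha.ne']
  field_simp
  ring

def HasProfile (r β : ℝ) (χ : ℝ → ℝ) (f : ℝ → ℝ → ℝ) : Prop :=
  ∃ (φ : ℝ → ℝ) (Ψ : ℝ → ℝ → ℝ), ContDiff ℝ ∞ φ ∧ tsupport φ ⊆ Ioo 0 1 ∧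
    IsHalfPlaneBump Ψ ∧ ∀ x, ∀ a > 0, f x a = φ (x * a ^ (-r)) * χ a * a ^ β + Ψ x a

lemma HasProfile.X1 {r β : ℝ} {χ : ℝ → ℝ} {f : ℝ → ℝ → ℝ} (hf : HasProfile r β χ f) :
    HasProfile r (β + (1 - r)) χ (X1 f) := by
  obtain ⟨φ, Ψ, hφ, hφsupp, hΨ, hfφΨ⟩ := hf
  refine ⟨deriv φ, _root_.X1 Ψ, (contDiff_infty_iff_deriv.1 hφ).2,
    tsupport_deriv_subset.trans hφsupp, hΨ.X1, fun x a ha => ?_⟩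
  have hslice : (fun y => f y a) = fun y => φ (y * a ^ (-r)) * χ a * a ^ β + Ψ y a :=
    funext fun y => hfφΨ y a ha
  have hd := (hasDerivAt_profile_fst (hφ.differentiable (by simp)) χ r β x a).fun_add
    (hΨ.hasDerivAt_fst x a)
  rw [_root_.X1, _root_.X1, hslice, hd.deriv, (hΨ.hasDerivAt_fst x a).deriv,
    Real.rpow_add ha, Real.rpow_sub ha, Real.rpow_one, Real.rpow_neg ha.le]
  field_simp

lemma HasProfile.X0 {r β : ℝ} {χ : ℝ → ℝ} (hχ : ContDiff ℝ ∞ χ)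
    (hχsupp : tsupport χ ⊆ Ioo (-1) 1) (hχ1 : ∀ t ∈ Icc (0 : ℝ) (1 / 2), χ t = 1)
    {f : ℝ → ℝ → ℝ} (hf : HasProfile r β χ f) : HasProfile r β χ (X0 f) := by
  obtain ⟨φ, Ψ, hφ, hφsupp, hΨ, hfφΨ⟩ := hf
  have hφ' : ContDiff ℝ ∞ (deriv φ) := (contDiff_infty_iff_deriv.1 hφ).2
  have htsupp : tsupport (fun u => β * φ u - r * u * deriv φ u) ⊆ tsupport φ := by
    refine closure_minimal (fun u hu => ?_) (isClosed_tsupport φ)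
    by_contra h
    simp [image_eq_zero_of_notMem_tsupport h, deriv_of_notMem_tsupport h] at hu
  have hR := isHalfPlaneBump_profile hφ (.of_isClosed_subset isCompact_Icc (isClosed_tsupport φ)
    (hφsupp.trans Ioo_subset_Icc_self)) ((contDiff_infty_iff_deriv.1 hχ).2) one_half_pos
    (mem_Icc_of_deriv_ne_zero hχsupp hχ1) r (β + 1)
  refine ⟨fun u => β * φ u - r * u * deriv φ u, _, by fun_prop, htsupp.trans hφsupp,
    hR.add hΨ.X0, fun x a ha => ?_⟩
  have hslice : (fun b => f x b) =ᶠ[𝓝 a] fun b => φ (x * b ^ (-r)) * χ b * b ^ β + Ψ x b :=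
    eventually_of_mem (Ioi_mem_nhds ha) fun b hb => hfφΨ x b hb
  have hd := (hasDerivAt_profile_snd (hφ.differentiable (by simp)) (hχ.differentiable (by simp))
    r β x ha).fun_add (hΨ.hasDerivAt_snd x a)
  rw [_root_.X0, _root_.X0, hslice.deriv_eq, hd.deriv, (hΨ.hasDerivAt_snd x a).deriv, if_pos ha]
  field_simp
  ring

end AxPlusB

open AxPlusB in
theorem derivative_structure_axb_general
    (r γ : ℝ) (k₀ k₁ : ℕ)
    (ψ χ : ℝ → ℝ)
    (hψ : ContDiff ℝ (⊤ : ℕ∞) ψ)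
    (hψsupp : tsupport ψ ⊆ Set.Ioo 0 1)
    (hχ : ContDiff ℝ (⊤ : ℕ∞) χ)
    (hχsupp : tsupport χ ⊆ Set.Ioo (-1 : ℝ) 1)
    (hχ1 : ∀ t ∈ Set.Icc (0 : ℝ) (1/2), χ t = 1)
    (g : ℝ → ℝ → ℝ)
    (hg : ∀ x a, g x a = ψ (x * a ^ (-r)) * χ a * a ^ (-γ)) :
    ∃ (ψt : ℝ → ℝ) (Ψt : ℝ → ℝ → ℝ),
      ContDiff ℝ (⊤ : ℕ∞) ψt ∧ tsupport ψt ⊆ Set.Ioo 0 1 ∧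
      ContDiffOn ℝ (⊤ : ℕ∞) (fun q : ℝ × ℝ => Ψt q.1 q.2) (Set.univ ×ˢ Set.Ioi 0) ∧
      IsCompact (tsupport (fun q : ℝ × ℝ => Ψt q.1 q.2)) ∧
      tsupport (fun q : ℝ × ℝ => Ψt q.1 q.2) ⊆ Set.univ ×ˢ Set.Ioi 0 ∧
      ∀ x : ℝ, ∀ a ∈ Set.Ioi (0 : ℝ),
        (X0^[k₀] (X1^[k₁] g)) x a
          = ψt (x * a ^ (-r)) * χ a * a ^ ((k₁ : ℝ) * (1 - r) - γ) + Ψt x a := by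
  have hX1 (k : ℕ) : HasProfile r (k * (1 - r) - γ) χ (X1^[k] g) := by
    induction k with
    | zero => exact ⟨ψ, _, hψ, hψsupp, isHalfPlaneBump_zero, fun x a _ => by simp [hg]⟩
    | succ k ih =>
      rw [iterate_succ_apply']
      convert ih.X1 using 2
      push_cast
      ring
  obtain ⟨φ, Ψ, hφ, hφsupp, hΨ, hfφΨ⟩ :=
    Iterate.rec (HasProfile r (k₁ * (1 - r) - γ) χ) (hX1 k₁) (fun _ h => h.X0 hχ hχsupp hχ1) k₀
  exact ⟨φ, Ψ, hφ, hφsupp, hΨ.1.contDiffOn, hΨ.2.1, hΨ.2.2, hfφΨ⟩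

theorem derivative_structure_axb
    (r γ : ℝ) (hr : 0 < r) (hγ : 0 < γ) (k₀ k₁ : ℕ)
    (ψ χ : ℝ → ℝ)
    (hψ : ContDiff ℝ (⊤ : ℕ∞) ψ) (hψ0 : ∀ t, 0 ≤ ψ t)
    (hψsupp : tsupport ψ ⊆ Set.Ioo 0 1)
    (hψ1 : ∀ t ∈ Set.Icc (1/4 : ℝ) (3/4), ψ t = 1)
    (hχ : ContDiff ℝ (⊤ : ℕ∞) χ) (hχ0 : ∀ t, 0 ≤ χ t)
    (hχsupp : tsupport χ ⊆ Set.Ioo (-1 : ℝ) 1)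
    (hχ1 : ∀ t ∈ Set.Icc (0 : ℝ) (1/2), χ t = 1)
    (g : ℝ → ℝ → ℝ)
    (hg : ∀ x a, g x a = ψ (x * a ^ (-r)) * χ a * a ^ (-γ)) :
    ∃ (ψt : ℝ → ℝ) (Ψt : ℝ → ℝ → ℝ),
      ContDiff ℝ (⊤ : ℕ∞) ψt ∧ tsupport ψt ⊆ Set.Ioo 0 1 ∧
      ContDiffOn ℝ (⊤ : ℕ∞) (fun q : ℝ × ℝ => Ψt q.1 q.2) (Set.univ ×ˢ Set.Ioi 0) ∧
      IsCompact (tsupport (fun q : ℝ × ℝ => Ψt q.1 q.2)) ∧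
      tsupport (fun q : ℝ × ℝ => Ψt q.1 q.2) ⊆ Set.univ ×ˢ Set.Ioi 0 ∧
      ∀ x : ℝ, ∀ a ∈ Set.Ioi (0 : ℝ),
        (X0^[k₀] (X1^[k₁] g)) x a
          = ψt (x * a ^ (-r)) * χ a * a ^ ((k₁ : ℝ) * (1 - r) - γ) + Ψt x a :=
  derivative_structure_axb_general r γ k₀ k₁ ψ χ hψ hψsupp hχ hχsupp hχ1 g hg
end
end

section
/- Let p ∈ [1,∞), r > 0 and γ ≥ r/(2p). Then g² does not belong to L^p(ρ); more precisely, ∫₀^∞ ∫_ℝ |g(x,a)|^{2p} a^{-1} dx da = ∞. -/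
open MeasureTheory Set

noncomputable section

/-!
On the strip `0 < a < 1/2` we have `χ a = 1`, and `ψ (x a⁻ʳ) = 1` for `x` in an interval of
length `a ^ r / 2`. So the inner integral of `|g|^(2p) a⁻¹` is at least `a ^ (r - 2pγ - 1) / 2`,
and `r - 2pγ - 1 ≤ -1` exactly when `γ ≥ r / (2p)`: the outer integral diverges at `a = 0`.
-/

theorem setLIntegral_ofReal_const_mul_rpow_Ioo_zero_eq_top {k e c : ℝ} (hk : 0 < k)
    (he : e ≤ -1) (hc : 0 < c) :
    ∫⁻ a in Ioo 0 c, ENNReal.ofReal (k * a ^ e) = ⊤ := by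
  by_contra h
  have hnonneg : 0 ≤ᵐ[volume.restrict (Ioo 0 c)] fun a : ℝ => k * a ^ e := by
    filter_upwards [ae_restrict_mem measurableSet_Ioo] with a ha
    exact mul_nonneg hk.le (Real.rpow_nonneg ha.1.le e)
  have hint : IntegrableOn (fun a : ℝ => k * a ^ e) (Ioo 0 c) :=
    ⟨(by fun_prop : Measurable fun a : ℝ => k * a ^ e).aestronglyMeasurable,
      (hasFiniteIntegral_iff_ofReal hnonneg).mpr (lt_top_iff_ne_top.mpr h)⟩
  rw [IntegrableOn, integrable_const_mul_iff hk.ne'.isUnit,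
    ← IntegrableOn, intervalIntegral.integrableOn_Ioo_rpow_iff hc] at hint
  exact hint.not_ge he

theorem mul_lintegral_le_of_eqOn_Icc {f : ℝ → ENNReal} {c : ENNReal} {u v : ℝ}
    (hf : EqOn f (fun _ => c) (Icc u v)) :
    c * ENNReal.ofReal (v - u) ≤ ∫⁻ x, f x :=
  calc c * ENNReal.ofReal (v - u) = ∫⁻ x in Icc u v, f x := by
        rw [setLIntegral_congr_fun measurableSet_Icc hf, setLIntegral_const, Real.volume_Icc]
    _ ≤ ∫⁻ x, f x := setLIntegral_le_lintegral _ _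

theorem mul_rpow_neg_mem_Icc {a r x : ℝ} (ha : 0 < a) (hx : x ∈ Icc (a ^ r / 4) (3 * a ^ r / 4)) :
    x * a ^ (-r) ∈ Icc (1 / 4 : ℝ) (3 / 4) := by
  have har : 0 < a ^ r := Real.rpow_pos_of_pos ha r
  rw [Real.rpow_neg ha.le, ← div_eq_mul_inv, mem_Icc, le_div_iff₀ har, div_le_iff₀ har]
  constructor <;> linarith [hx.1, hx.2]

theorem ofReal_rpow_le_lintegral_bump {ψ χ : ℝ → ℝ}
    (hψ1 : ∀ t ∈ Icc (1 / 4 : ℝ) (3 / 4), ψ t = 1) (hχ1 : ∀ t ∈ Icc (0 : ℝ) (1 / 2), χ t = 1)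
    (q r γ : ℝ) {a : ℝ} (ha : a ∈ Ioo (0 : ℝ) (1 / 2)) :
    ENNReal.ofReal (2⁻¹ * a ^ (r - q * γ - 1)) ≤
      ∫⁻ x, ENNReal.ofReal (|ψ (x * a ^ (-r)) * χ a * a ^ (-γ)| ^ q / a) := by
  have ha0 : 0 < a := ha.1
  have hconst : EqOn (fun x => ENNReal.ofReal (|ψ (x * a ^ (-r)) * χ a * a ^ (-γ)| ^ q / a))
      (fun _ => ENNReal.ofReal (a ^ (-q * γ - 1))) (Icc (a ^ r / 4) (3 * a ^ r / 4)) := by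
    intro x hx
    dsimp only
    rw [hψ1 _ (mul_rpow_neg_mem_Icc ha0 hx), hχ1 a ⟨ha0.le, ha.2.le⟩, one_mul, one_mul,
      abs_of_pos (Real.rpow_pos_of_pos ha0 _), ← Real.rpow_mul ha0.le,
      ← Real.rpow_sub_one ha0.ne']
    congr 2
    ring
  calc ENNReal.ofReal (2⁻¹ * a ^ (r - q * γ - 1))
      = ENNReal.ofReal (a ^ (-q * γ - 1)) * ENNReal.ofReal (3 * a ^ r / 4 - a ^ r / 4) := by
        rw [← ENNReal.ofReal_mul (Real.rpow_nonneg ha0.le _),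
          show r - q * γ - 1 = r + (-q * γ - 1) by ring, Real.rpow_add ha0]
        ring_nf
    _ ≤ _ := mul_lintegral_le_of_eqOn_Icc hconst

theorem g_squared_not_in_Lp_axb_general
    (p r γ : ℝ) (hp : 1 ≤ p) (hγ : r / (2 * p) ≤ γ)
    (ψ χ : ℝ → ℝ)
    (hψ1 : ∀ t ∈ Set.Icc (1/4 : ℝ) (3/4), ψ t = 1)
    (hχ1 : ∀ t ∈ Set.Icc (0 : ℝ) (1/2), χ t = 1)
    (g : ℝ → ℝ → ℝ)
    (hg : ∀ x a, g x a = ψ (x * a ^ (-r)) * χ a * a ^ (-γ)) :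
    (∫⁻ a in Set.Ioi (0 : ℝ), ∫⁻ x : ℝ,
        ENNReal.ofReal (|g x a| ^ (2 * p) / a)) = ⊤ := by
  have he : r - 2 * p * γ - 1 ≤ -1 := by
    have := (div_le_iff₀ (by linarith : (0 : ℝ) < 2 * p)).mp hγ
    linarith
  simp_rw [hg]
  rw [eq_top_iff, ← setLIntegral_ofReal_const_mul_rpow_Ioo_zero_eq_top (by norm_num : (0 : ℝ) < 2⁻¹) he
    (by norm_num : (0 : ℝ) < 1 / 2)]
  calc ∫⁻ a in Ioo 0 (1 / 2), ENNReal.ofReal (2⁻¹ * a ^ (r - 2 * p * γ - 1))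
      ≤ ∫⁻ a in Ioo 0 (1 / 2), ∫⁻ x,
          ENNReal.ofReal (|ψ (x * a ^ (-r)) * χ a * a ^ (-γ)| ^ (2 * p) / a) :=
        setLIntegral_mono' measurableSet_Ioo
          fun a ha => ofReal_rpow_le_lintegral_bump hψ1 hχ1 (2 * p) r γ ha
    _ ≤ _ := lintegral_mono_set Ioo_subset_Ioi_self

theorem g_squared_not_in_Lp_axb
    (p r γ : ℝ) (hp : 1 ≤ p) (hr : 0 < r) (hγ : r / (2 * p) ≤ γ)
    (ψ χ : ℝ → ℝ)
    (hψ : ContDiff ℝ (⊤ : ℕ∞) ψ) (hψ0 : ∀ t, 0 ≤ ψ t)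
    (hψsupp : tsupport ψ ⊆ Set.Ioo 0 1)
    (hψ1 : ∀ t ∈ Set.Icc (1/4 : ℝ) (3/4), ψ t = 1)
    (hχ : ContDiff ℝ (⊤ : ℕ∞) χ) (hχ0 : ∀ t, 0 ≤ χ t)
    (hχsupp : tsupport χ ⊆ Set.Ioo (-1 : ℝ) 1)
    (hχ1 : ∀ t ∈ Set.Icc (0 : ℝ) (1/2), χ t = 1)
    (g : ℝ → ℝ → ℝ)
    (hg : ∀ x a, g x a = ψ (x * a ^ (-r)) * χ a * a ^ (-γ)) :
    (∫⁻ a in Set.Ioi (0 : ℝ), ∫⁻ x : ℝ,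
        ENNReal.ofReal (|g x a| ^ (2 * p) / a)) = ⊤ :=
  g_squared_not_in_Lp_axb_general p r γ hp hγ ψ χ hψ1 hχ1 g hg
end
end

section
/- Let p ∈ (1,∞), 0 < r < 1 and 0 < γ < r/p. Then g, X₀ g and X₁ g all belong to L^p(ρ), but g is not essentially bounded with respect to ρ: its ρ-essential supremum is infinite. (This is the paper's example showing that the first-order Sobolev embedding into L^∞ fails at the endpoint on the ax+b group.) -/
open MeasureTheory Set

noncomputable section

/-- The right Haar measure `ρ` of the `ax+b` group, `dρ(x,a) = a⁻¹ dx da` on `ℝ × (0,∞)`. -/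
def rhoMeasure : Measure (ℝ × ℝ) :=
  (((volume : Measure ℝ).prod
      ((volume : Measure ℝ).withDensity fun a => ENNReal.ofReal a⁻¹))).restrict
    (Set.univ ×ˢ Set.Ioi 0)

/-!
Near `a = 0` the function `g` lives in the cusp `0 < x < a ^ r`, whose slices have length
`a ^ r`. Each of `g`, `X₀ g`, `X₁ g` is a continuous profile `Φ (x * a ^ (-r), a)`, vanishing
unless `0 < x * a ^ (-r) < 1` and `a < 1`, times `a ^ t` with `t = -γ`, `-γ` and `1 - r - γ`
respectively, so its `p`-th power integrates against `ρ` like `∫₀¹ a ^ (t * p + r - 1) da`,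
which is finite because `γ * p < r < 1`. On the other hand `g = a ^ (-γ)` wherever
`x * a ^ (-r) ∈ (1/4, 3/4)` and `a < 1/2`; this region is open and meets every strip
`0 < a < a₀`, so it has positive `ρ`-measure there and `g` is not essentially bounded.
-/

theorem lintegral_ofReal_rpow_div_le {p r t C a : ℝ} (hp : 0 < p) (hC : 0 ≤ C) (ha : 0 < a)
    {h : ℝ → ℝ} (hsupp : ∀ x, h x ≠ 0 → x ∈ Ioo 0 (a ^ r)) (hbound : ∀ x, |h x| ≤ C * a ^ t) :
    ∫⁻ x, ENNReal.ofReal (|h x| ^ p / a) ≤ ENNReal.ofReal (C ^ p * a ^ (t * p + r - 1)) := by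
  have hpoint : ∀ x, ENNReal.ofReal (|h x| ^ p / a) ≤
      (Ioo 0 (a ^ r)).indicator (fun _ => ENNReal.ofReal (C ^ p * a ^ (t * p) / a)) x := by
    intro x
    by_cases hx : x ∈ Ioo 0 (a ^ r)
    · rw [indicator_of_mem hx, Real.rpow_mul ha.le, ← Real.mul_rpow hC (by positivity)]
      gcongr
      exact hbound x
    · have : h x = 0 := not_imp_comm.mp (hsupp x) hx
      simp [this, Real.zero_rpow hp.ne']
  calc ∫⁻ x, ENNReal.ofReal (|h x| ^ p / a)
      ≤ ∫⁻ x, (Ioo 0 (a ^ r)).indicator (fun _ => ENNReal.ofReal (C ^ p * a ^ (t * p) / a)) x :=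
        lintegral_mono hpoint
    _ = ENNReal.ofReal (C ^ p * a ^ (t * p + r - 1)) := by
        rw [lintegral_indicator_const measurableSet_Ioo, Real.volume_Ioo, sub_zero,
          ← ENNReal.ofReal_mul (by positivity), Real.rpow_sub ha, Real.rpow_add ha, Real.rpow_one]
        ring_nf

theorem memLpRho_of_abs_le {p r t C : ℝ} (hp : 0 < p) (hC : 0 ≤ C) (htr : 0 < t * p + r)
    {f : ℝ → ℝ → ℝ} (hsupp : ∀ x a, 0 < a → f x a ≠ 0 → a < 1 ∧ x ∈ Ioo 0 (a ^ r))
    (hbound : ∀ x a, 0 < a → a < 1 → |f x a| ≤ C * a ^ t) :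
    MemLpRho p f := by
  have hslice : ∀ a ∈ Ioi (0 : ℝ), ∫⁻ x, ENNReal.ofReal (|f x a| ^ p / a) ≤
      (Ioo 0 1).indicator (fun a => ENNReal.ofReal (C ^ p * a ^ (t * p + r - 1))) a := by
    intro a (ha : 0 < a)
    by_cases ha1 : a < 1
    · rw [indicator_of_mem (show a ∈ Ioo 0 1 from ⟨ha, ha1⟩)]
      exact lintegral_ofReal_rpow_div_le hp hC ha (fun x hx => (hsupp x a ha hx).2)
        (fun x => hbound x a ha ha1)
    · have : ∀ x, f x a = 0 := fun x => not_imp_comm.mp (hsupp x a ha) (fun h => ha1 h.1)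
      simp [this, Real.zero_rpow hp.ne']
  have hint : IntegrableOn (fun a : ℝ => C ^ p * a ^ (t * p + r - 1)) (Ioo 0 1) :=
    ((intervalIntegral.integrableOn_Ioo_rpow_iff one_pos).mpr (by linarith)).const_mul _
  calc ∫⁻ a in Ioi 0, ∫⁻ x, ENNReal.ofReal (|f x a| ^ p / a)
      ≤ ∫⁻ a in Ioi 0, (Ioo 0 1).indicator
          (fun a => ENNReal.ofReal (C ^ p * a ^ (t * p + r - 1))) a :=
        setLIntegral_mono' measurableSet_Ioi hslice
    _ ≤ ∫⁻ a in Ioo 0 1, ENNReal.ofReal (C ^ p * a ^ (t * p + r - 1)) :=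
        (setLIntegral_le_lintegral _ _).trans_eq (lintegral_indicator measurableSet_Ioo _)
    _ < ⊤ := hint.setLIntegral_lt_top

theorem memLpRho_of_eq_profile {p r t : ℝ} (hp : 0 < p) (htr : 0 < t * p + r)
    {Φ : ℝ → ℝ → ℝ} (hΦ : Continuous (Function.uncurry Φ))
    (hΦu : ∀ u ∉ Ioo 0 1, ∀ a, Φ u a = 0) (hΦa : ∀ u a, 1 ≤ a → Φ u a = 0)
    {f : ℝ → ℝ → ℝ} (hf : ∀ x a, 0 < a → f x a = Φ (x * a ^ (-r)) a * a ^ t) :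
    MemLpRho p f := by
  have hK : IsCompact (Icc (0 : ℝ) 1 ×ˢ Icc (0 : ℝ) 1) := isCompact_Icc.prod isCompact_Icc
  obtain ⟨C, hC⟩ := hK.exists_bound_of_continuousOn hΦ.continuousOn
  have hC0 : 0 ≤ C := (norm_nonneg _).trans (hC (0, 0) (by simp))
  refine memLpRho_of_abs_le hp hC0 htr (fun x a ha hfx => ?_) (fun x a ha ha1 => ?_)
  · rw [hf x a ha] at hfx
    have hu : x * a ^ (-r) ∈ Ioo 0 1 := by_contra fun hu => hfx (by rw [hΦu _ hu, zero_mul])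
    refine ⟨lt_of_not_ge fun ha1 => hfx (by rw [hΦa _ _ ha1, zero_mul]), ?_⟩
    have hx : x = x * a ^ (-r) * a ^ r := by
      rw [mul_assoc, ← Real.rpow_add ha, neg_add_cancel, Real.rpow_zero, mul_one]
    have har : 0 < a ^ r := Real.rpow_pos_of_pos ha r
    constructor <;> rw [hx] <;> nlinarith [hu.1, hu.2]
  · rw [hf x a ha, abs_mul, abs_of_pos (Real.rpow_pos_of_pos ha t)]
    by_cases hu : x * a ^ (-r) ∈ Ioo 0 1
    · gcongr
      exact hC (_, a) ⟨Ioo_subset_Icc_self hu, ha.le, ha1.le⟩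
    · rw [hΦu _ hu, abs_zero, zero_mul]
      positivity

theorem eq_zero_and_deriv_eq_zero_of_notMem {f : ℝ → ℝ} {s : Set ℝ} (hf : tsupport f ⊆ s)
    {x : ℝ} (hx : x ∉ s) : f x = 0 ∧ deriv f x = 0 :=
  ⟨image_eq_zero_of_notMem_tsupport fun h => hx (hf h),
    Function.notMem_support.mp fun h => hx (hf (support_deriv_subset h))⟩

theorem X1_bump_eq {ψ : ℝ → ℝ} (hψ : Differentiable ℝ ψ) (χ : ℝ → ℝ) (r γ : ℝ) {x a : ℝ}
    (ha : 0 < a) :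
    X1 (fun x a => ψ (x * a ^ (-r)) * χ a * a ^ (-γ)) x a =
      deriv ψ (x * a ^ (-r)) * χ a * a ^ (1 - r - γ) := by
  have hx : HasDerivAt (fun y => ψ (y * a ^ (-r)) * χ a * a ^ (-γ))
      (deriv ψ (x * a ^ (-r)) * (1 * a ^ (-r)) * χ a * a ^ (-γ)) x :=
    (((hψ _).hasDerivAt.comp x ((hasDerivAt_id x).mul_const _)).mul_const _).mul_const _
  rw [X1, hx.deriv, show 1 - r - γ = 1 + -r + -γ by ring, Real.rpow_add ha, Real.rpow_add ha,
    Real.rpow_one]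
  ring

theorem X0_bump_eq {ψ χ : ℝ → ℝ} (hψ : Differentiable ℝ ψ) (hχ : Differentiable ℝ χ) (r γ : ℝ)
    {x a : ℝ} (ha : 0 < a) :
    X0 (fun x a => ψ (x * a ^ (-r)) * χ a * a ^ (-γ)) x a =
      (-r * (x * a ^ (-r)) * deriv ψ (x * a ^ (-r)) * χ a
        + ψ (x * a ^ (-r)) * (a * deriv χ a) - γ * ψ (x * a ^ (-r)) * χ a) * a ^ (-γ) := by
  have hu : HasDerivAt (fun b => x * b ^ (-r)) (x * (-r * a ^ (-r - 1))) a :=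
    (Real.hasDerivAt_rpow_const (Or.inl ha.ne')).const_mul x
  have hd : HasDerivAt (fun b => ψ (x * b ^ (-r)) * χ b * b ^ (-γ))
      ((deriv ψ (x * a ^ (-r)) * (x * (-r * a ^ (-r - 1))) * χ a
        + ψ (x * a ^ (-r)) * deriv χ a) * a ^ (-γ)
        + ψ (x * a ^ (-r)) * χ a * (-γ * a ^ (-γ - 1))) a :=
    (((hψ _).hasDerivAt.comp a hu).fun_mul (hχ a).hasDerivAt).fun_mul
      (Real.hasDerivAt_rpow_const (Or.inl ha.ne'))
  rw [X0, hd.deriv, Real.rpow_sub ha, Real.rpow_sub ha, Real.rpow_one]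
  field_simp
  ring

theorem essSup_eq_top_of_forall_measure_ne_zero {α : Type*} [MeasurableSpace α] {μ : Measure α}
    {F : α → ENNReal} (h : ∀ M : ℝ, ∃ s, μ s ≠ 0 ∧ ∀ q ∈ s, ENNReal.ofReal M ≤ F q) :
    essSup F μ = ⊤ := by
  by_contra hne
  obtain ⟨s, hs, hsF⟩ := h ((essSup F μ).toReal + 1)
  refine hs (measure_mono_null (fun q hq => ?_) (ae_iff.mp (ENNReal.ae_le_essSup F)))
  have hq := hsF q hq
  rw [ENNReal.ofReal_add ENNReal.toReal_nonneg zero_le_one, ENNReal.ofReal_toReal hne,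
    ENNReal.ofReal_one] at hq
  exact not_le.mpr ((ENNReal.lt_add_right hne one_ne_zero).trans_le hq)

theorem rhoMeasure_pos_of_isOpen {U : Set (ℝ × ℝ)} (hU : IsOpen U) {q : ℝ × ℝ} (hq : q ∈ U)
    (hq₂ : 0 < q.2) : 0 < rhoMeasure U := by
  obtain ⟨ε, hε, hball⟩ := Metric.isOpen_iff.mp hU q hq
  set δ := min ε q.2
  have hδ : 0 < δ := lt_min hε hq₂
  have hδq : δ ≤ q.2 := min_le_right _ _
  have hsub : Metric.ball q.1 δ ×ˢ Metric.ball q.2 δ ⊆ U := by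
    rw [ball_prod_same]
    exact (Metric.ball_subset_ball (min_le_left _ _)).trans hball
  have hpos : Metric.ball q.2 δ ⊆ Ioi 0 := fun a ha => by
    rw [Real.ball_eq_Ioo] at ha
    show 0 < a
    linarith [ha.1]
  refine lt_of_lt_of_le ?_ (measure_mono hsub)
  rw [rhoMeasure, Measure.restrict_apply (measurableSet_ball.prod measurableSet_ball),
    inter_eq_left.mpr (prod_mono (subset_univ _) hpos), Measure.prod_prod]
  refine ENNReal.mul_pos (Metric.measure_ball_pos volume q.1 hδ).ne' ?_
  rw [ne_eq, withDensity_apply_eq_zero' (by fun_prop),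
    inter_eq_right.mpr fun a ha => by simpa using hpos ha]
  exact (Metric.measure_ball_pos volume q.2 hδ).ne'

theorem rhoMeasure_setOf_rpow_mem_pos (r : ℝ) {a₀ : ℝ} (ha₀ : 0 < a₀) {s : Set ℝ}
    (hs : IsOpen s) (hne : s.Nonempty) :
    0 < rhoMeasure {q : ℝ × ℝ | q.2 ∈ Ioo 0 a₀ ∧ q.1 * q.2 ^ (-r) ∈ s} := by
  obtain ⟨u, hu⟩ := hne
  have hcont : ContinuousOn (fun q : ℝ × ℝ => q.1 * q.2 ^ (-r)) (univ ×ˢ Ioo 0 a₀) :=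
    continuousOn_fst.mul (continuousOn_snd.rpow_const fun q hq => Or.inl hq.2.1.ne')
  have hopen : IsOpen {q : ℝ × ℝ | q.2 ∈ Ioo 0 a₀ ∧ q.1 * q.2 ^ (-r) ∈ s} := by
    convert hcont.isOpen_inter_preimage (isOpen_univ.prod isOpen_Ioo) hs using 1
    ext q
    simp
  have ha : 0 < a₀ / 2 := half_pos ha₀
  refine rhoMeasure_pos_of_isOpen hopen (q := (u * (a₀ / 2) ^ r, a₀ / 2))
    ⟨⟨ha, half_lt_self ha₀⟩, ?_⟩ ha
  rwa [mul_assoc, ← Real.rpow_add ha, add_neg_cancel, Real.rpow_zero, mul_one]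

theorem essSup_bump_eq_top {ψ χ : ℝ → ℝ} (r : ℝ) {γ : ℝ} (hγ : 0 < γ)
    (hψ1 : ∀ t ∈ Icc (1/4 : ℝ) (3/4), ψ t = 1) (hχ1 : ∀ t ∈ Icc (0 : ℝ) (1/2), χ t = 1) :
    essSup (fun q : ℝ × ℝ => ENNReal.ofReal |ψ (q.1 * q.2 ^ (-r)) * χ q.2 * q.2 ^ (-γ)|)
      rhoMeasure = ⊤ := by
  refine essSup_eq_top_of_forall_measure_ne_zero fun M => ?_
  obtain ⟨a₀, ha₀, hsmall⟩ := mem_nhdsGT_iff_exists_Ioo_subset.mp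
    (Filter.inter_mem (Ioo_mem_nhdsGT one_half_pos)
      ((tendsto_rpow_neg_nhdsGT_zero (neg_neg_of_pos hγ)).eventually_ge_atTop M))
  refine ⟨_, (rhoMeasure_setOf_rpow_mem_pos r ha₀ isOpen_Ioo (nonempty_Ioo.mpr
    (by norm_num : (1 / 4 : ℝ) < 3 / 4))).ne', fun q ⟨ha, hu⟩ => ?_⟩
  obtain ⟨⟨-, ha2⟩, hM⟩ := hsmall ha
  rw [hψ1 _ (Ioo_subset_Icc_self hu), hχ1 _ ⟨ha.1.le, ha2.le⟩, one_mul, one_mul,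
    abs_of_pos (Real.rpow_pos_of_pos ha.1 _)]
  exact ENNReal.ofReal_le_ofReal hM

theorem sobolev_embedding_fails_axb_general
    (p r γ : ℝ) (hp1 : 1 < p) (hr1 : r < 1)
    (hγ0 : 0 < γ) (hγ : γ < r / p)
    (ψ χ : ℝ → ℝ)
    (hψ : ContDiff ℝ (⊤ : ℕ∞) ψ)
    (hψsupp : tsupport ψ ⊆ Set.Ioo 0 1)
    (hψ1 : ∀ t ∈ Set.Icc (1/4 : ℝ) (3/4), ψ t = 1)
    (hχ : ContDiff ℝ (⊤ : ℕ∞) χ)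
    (hχsupp : tsupport χ ⊆ Set.Ioo (-1 : ℝ) 1)
    (hχ1 : ∀ t ∈ Set.Icc (0 : ℝ) (1/2), χ t = 1)
    (g : ℝ → ℝ → ℝ)
    (hg : ∀ x a, g x a = ψ (x * a ^ (-r)) * χ a * a ^ (-γ)) :
    MemLpRho p g ∧ MemLpRho p (X0 g) ∧ MemLpRho p (X1 g) ∧
    essSup (fun q : ℝ × ℝ => ENNReal.ofReal |g q.1 q.2|) rhoMeasure = ⊤ := by
  obtain rfl : g = fun x a => ψ (x * a ^ (-r)) * χ a * a ^ (-γ) := funext₂ hg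
  have hp : 0 < p := zero_lt_one.trans hp1
  have hγp : γ * p < r := (lt_div_iff₀ hp).mp hγ
  have hψd : Differentiable ℝ ψ := hψ.differentiable (by simp)
  have hχd : Differentiable ℝ χ := hχ.differentiable (by simp)
  have hψ' : Continuous (deriv ψ) := hψ.continuous_deriv (by simp)
  have hχ' : Continuous (deriv χ) := hχ.continuous_deriv (by simp)
  have hψz : ∀ u ∉ Ioo 0 1, ψ u = 0 ∧ deriv ψ u = 0 := fun u =>
    eq_zero_and_deriv_eq_zero_of_notMem hψsupp
  have hχz : ∀ a : ℝ, 1 ≤ a → χ a = 0 ∧ deriv χ a = 0 := fun a ha =>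
    eq_zero_and_deriv_eq_zero_of_notMem hχsupp fun h => h.2.not_ge ha
  refine ⟨?_, ?_, ?_, ?_⟩
  · exact memLpRho_of_eq_profile (Φ := fun u a => ψ u * χ a) hp (by linarith)
      (by fun_prop) (fun u hu a => by simp [hψz u hu]) (fun u a ha => by simp [hχz a ha])
      fun x a _ => rfl
  · exact memLpRho_of_eq_profile
      (Φ := fun u a => -r * u * deriv ψ u * χ a + ψ u * (a * deriv χ a) - γ * ψ u * χ a)
      hp (by linarith) (by fun_prop) (fun u hu a => by simp [hψz u hu])
      (fun u a ha => by simp [hχz a ha]) fun x a ha => X0_bump_eq hψd hχd r γ ha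
  · exact memLpRho_of_eq_profile (Φ := fun u a => deriv ψ u * χ a) hp
      (by nlinarith) (by fun_prop) (fun u hu a => by simp [hψz u hu])
      (fun u a ha => by simp [hχz a ha]) fun x a ha => X1_bump_eq hψd χ r γ ha
  · exact essSup_bump_eq_top r hγ0 hψ1 hχ1

theorem sobolev_embedding_fails_axb
    (p r γ : ℝ) (hp1 : 1 < p) (hr0 : 0 < r) (hr1 : r < 1)
    (hγ0 : 0 < γ) (hγ : γ < r / p)
    (ψ χ : ℝ → ℝ)
    (hψ : ContDiff ℝ (⊤ : ℕ∞) ψ) (hψ0 : ∀ t, 0 ≤ ψ t)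
    (hψsupp : tsupport ψ ⊆ Set.Ioo 0 1)
    (hψ1 : ∀ t ∈ Set.Icc (1/4 : ℝ) (3/4), ψ t = 1)
    (hχ : ContDiff ℝ (⊤ : ℕ∞) χ) (hχ0 : ∀ t, 0 ≤ χ t)
    (hχsupp : tsupport χ ⊆ Set.Ioo (-1 : ℝ) 1)
    (hχ1 : ∀ t ∈ Set.Icc (0 : ℝ) (1/2), χ t = 1)
    (g : ℝ → ℝ → ℝ)
    (hg : ∀ x a, g x a = ψ (x * a ^ (-r)) * χ a * a ^ (-γ)) :
    MemLpRho p g ∧ MemLpRho p (X0 g) ∧ MemLpRho p (X1 g) ∧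
    essSup (fun q : ℝ × ℝ => ENNReal.ofReal |g q.1 q.2|) rhoMeasure = ⊤ :=
  sobolev_embedding_fails_axb_general p r γ hp1 hr1 hγ0 hγ ψ χ hψ hψsupp hψ1 hχ hχsupp hχ1 g hg
end
end

section
/- Let β ∈ [0,1). There exists a constant C > 0, depending only on C_D and β, such that for every f ∈ L^1(μ) and every λ > 0, μ({x ∈ X : M^R_β f(x) > λ}) ≤ C · (λ^{-1} ‖f‖_{L^1(μ)})^{1/(1-β)}. That is, M^R_β is bounded from L^1(μ) to the weak space L^{1/(1-β),∞}(μ). -/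
open MeasureTheory Metric ENNReal

noncomputable section

/-- The modified local Hardy–Littlewood maximal function with parameter `β`, taken over
open balls of radius at most `R` containing the point:
`M^R_β f (x) = sup { μ(B)^{β-1} ∫_B |f| dμ : B ball of radius ≤ R, x ∈ B }`. -/
def locMaxFn {X : Type*} [MetricSpace X] [MeasurableSpace X] (μ : Measure X)
    (R β : ℝ) (f : X → ℝ) (x : X) : ℝ≥0∞ :=
  ⨆ (y : X) (s : ℝ) (_ : 0 < s ∧ s ≤ R ∧ x ∈ ball y s),
    μ (ball y s) ^ (β - 1) * ∫⁻ z in ball y s, ENNReal.ofReal |f z| ∂μ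

/-! With `ν = |f| μ` and `p = 1/(1-β)`, every ball `B` selected by the maximal function at
level `λ` satisfies `μ B ≤ (λ⁻¹ ν B)^p`. Vitali's lemma extracts a disjoint subfamily whose
enlargements cover the level set; it is countable because its balls have positive mass for the
finite measure `ν`. Local doubling bounds each enlargement by `C_D³ μ B`, and since `p ≥ 1`
the sum of the `p`-th powers is at most the `p`-th power of the sum, which disjointness bounds
by `(λ⁻¹ ‖f‖₁)^p`. -/

theorem ENNReal.tsum_rpow_le_rpow_tsum {ι : Type*} (x : ι → ℝ≥0∞) {p : ℝ}
    (hp : 1 ≤ p) : ∑' i, x i ^ p ≤ (∑' i, x i) ^ p := by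
  have hp' : 0 ≤ p - 1 := by linarith
  have split (a : ℝ≥0∞) : a ^ p = a * a ^ (p - 1) := by
    conv_lhs => rw [← add_sub_cancel 1 p]
    rw [ENNReal.rpow_add_of_nonneg _ _ zero_le_one hp', ENNReal.rpow_one]
  calc ∑' i, x i ^ p ≤ ∑' i, x i * (∑' j, x j) ^ (p - 1) := by
        refine ENNReal.tsum_le_tsum fun i => ?_
        rw [split]
        gcongr
        exact ENNReal.le_tsum i
    _ = (∑' i, x i) ^ p := by rw [ENNReal.tsum_mul_right, ← split]

theorem ENNReal.le_rpow_inv_of_lt_rpow_neg_mul {a b c : ℝ≥0∞} {θ : ℝ} (hθ : 0 < θ)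
    (ha₀ : a ≠ 0) (ha : a ≠ ∞) (h : c < a ^ (-θ) * b) : a ≤ (c⁻¹ * b) ^ θ⁻¹ := by
  have hb : b ≠ 0 := right_ne_zero_of_mul (pos_of_gt h).ne'
  have haθ₀ : a ^ θ ≠ 0 := (ENNReal.rpow_pos (pos_iff_ne_zero.mpr ha₀) ha).ne'
  have haθ : a ^ θ ≠ ∞ := ENNReal.rpow_ne_top_of_nonneg hθ.le ha
  rw [ENNReal.rpow_neg, mul_comm, ← div_eq_mul_inv,
    ENNReal.lt_div_iff_mul_lt (Or.inl haθ₀) (Or.inl haθ)] at h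
  rw [ENNReal.le_rpow_inv_iff hθ, mul_comm, ← div_eq_mul_inv,
    ENNReal.le_div_iff_mul_le (Or.inr hb)
      (Or.inl (lt_top_of_mul_ne_top_left (ne_top_of_lt h) haθ₀).ne), mul_comm]
  exact h.le

theorem measure_ball_eight_mul_le_of_doubling {X : Type*} [PseudoMetricSpace X]
    [MeasurableSpace X] {μ : Measure X} {R : ℝ} {K : ℝ≥0∞}
    (hdouble : ∀ (y : X) (s : ℝ), 0 < s → s ≤ 4 * R →
      μ (ball y (2 * s)) ≤ K * μ (ball y s))
    (y : X) {s : ℝ} (hs : 0 < s) (hsR : s ≤ R) :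
    μ (ball y (8 * s)) ≤ K ^ 3 * μ (ball y s) :=
  calc μ (ball y (8 * s)) = μ (ball y (2 * (2 * (2 * s)))) := by ring_nf
    _ ≤ K * μ (ball y (2 * (2 * s))) := hdouble y _ (by positivity) (by linarith)
    _ ≤ K * (K * μ (ball y (2 * s))) := by
        gcongr; exact hdouble y _ (by positivity) (by linarith)
    _ ≤ K * (K * (K * μ (ball y s))) := by gcongr; exact hdouble y s hs (by linarith)
    _ = K ^ 3 * μ (ball y s) := by ring

theorem measure_le_mul_rpow_of_forall_mem_ball {X : Type*} [PseudoMetricSpace X]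
    [MeasurableSpace X] [OpensMeasurableSpace X] (μ ν : Measure X) [SFinite ν]
    {E : Set X} {y : X → X} {s : X → ℝ} {R : ℝ} {K c : ℝ≥0∞} {p : ℝ} (hp : 1 ≤ p)
    (hsR : ∀ x ∈ E, s x ≤ R) (hmem : ∀ x ∈ E, x ∈ ball (y x) (s x))
    (hdbl : ∀ x ∈ E, μ (ball (y x) (8 * s x)) ≤ K * μ (ball (y x) (s x)))
    (hν : ∀ x ∈ E, ν (ball (y x) (s x)) ≠ 0)
    (hμν : ∀ x ∈ E, μ (ball (y x) (s x)) ≤ (c * ν (ball (y x) (s x))) ^ p) :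
    μ E ≤ K * (c * ν Set.univ) ^ p := by
  obtain ⟨u, hut, hdisj, hcov⟩ :=
    Vitali.exists_disjoint_subfamily_covering_enlargement_closedBall E y s R hsR 4
      (by norm_num)
  have hdisj' : u.PairwiseDisjoint fun b => ball (y b) (s b) :=
    hdisj.mono fun b => ball_subset_closedBall
  have hu : u.Countable := by
    have hpos := Measure.countable_meas_pos_of_disjoint_iUnion (μ := ν)
      (As := fun b : u => ball (y b) (s b)) (fun _ => measurableSet_ball)
      fun b b' hbb' => hdisj' b.2 b'.2 (Subtype.coe_ne_coe.mpr hbb')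
    simp only [fun b : u => pos_iff_ne_zero.mpr (hν b (hut b.2)), Set.ofPred_true,
      Set.countable_univ_iff] at hpos
    exact Set.countable_coe_iff.mp hpos
  have hE : E ⊆ ⋃ b ∈ u, ball (y b) (8 * s b) := by
    intro x hx
    obtain ⟨b, hbu, hsub⟩ := hcov x hx
    have hsb : 0 < s b := pos_of_mem_ball (hmem b (hut hbu))
    have hxb : dist x (y b) ≤ 4 * s b := hsub (ball_subset_closedBall (hmem x hx))
    exact Set.mem_biUnion hbu (mem_ball.mpr (by linarith))
  calc μ E ≤ ∑' b : u, μ (ball (y b) (8 * s b)) :=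
        (measure_mono hE).trans (measure_biUnion_le μ hu _)
    _ ≤ ∑' b : u, K * (c * ν (ball (y b) (s b))) ^ p :=
        ENNReal.tsum_le_tsum fun b =>
          (hdbl b (hut b.2)).trans (by gcongr; exact hμν b (hut b.2))
    _ ≤ K * (c * ∑' b : u, ν (ball (y b) (s b))) ^ p := by
        rw [ENNReal.tsum_mul_left, ← ENNReal.tsum_mul_left (a := c)]
        gcongr
        exact ENNReal.tsum_rpow_le_rpow_tsum _ hp
    _ ≤ K * (c * ν Set.univ) ^ p := by
        rw [← measure_biUnion hu hdisj' fun _ _ => measurableSet_ball]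
        gcongr
        exact Set.subset_univ _

theorem exists_ball_of_lt_locMaxFn {X : Type*} [MetricSpace X] [MeasurableSpace X]
    {μ : Measure X} {R β : ℝ} {f : X → ℝ} {x : X} {c : ℝ≥0∞}
    (h : c < locMaxFn μ R β f x) :
    ∃ y s, (0 < s ∧ s ≤ R ∧ x ∈ ball y s) ∧
      c < μ (ball y s) ^ (β - 1) * ∫⁻ z in ball y s, ENNReal.ofReal |f z| ∂μ := by
  simpa only [locMaxFn, lt_iSup_iff, exists_prop] using h

theorem weak_type_modified_local_maximal
    (β : ℝ) (hβ0 : 0 ≤ β) (hβ1 : β < 1) (C_D : ℝ) (hCD : 0 < C_D) :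
    ∃ C : ℝ, 0 < C ∧
      ∀ (X : Type) [MetricSpace X] [MeasurableSpace X] [BorelSpace X]
        (μ : Measure X) (R : ℝ), 0 < R →
        (∀ (x : X) (t : ℝ), 0 < t → 0 < μ (ball x t) ∧ μ (ball x t) < ⊤) →
        (∀ (y : X) (s : ℝ), 0 < s → s ≤ 4 * R →
          μ (ball y (2 * s)) ≤ ENNReal.ofReal C_D * μ (ball y s)) →
        ∀ f : X → ℝ, Integrable f μ → ∀ lam : ℝ, 0 < lam →
          μ {x | ENNReal.ofReal lam < locMaxFn μ R β f x}
            ≤ ENNReal.ofReal C *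
                ENNReal.ofReal (lam⁻¹ * ∫ x, |f x| ∂μ) ^ (1 / (1 - β)) := by
  refine ⟨C_D ^ 3, by positivity, ?_⟩
  intro X _ _ _ μ R _ hball hdouble f hf lam hlam
  set ν := μ.withDensity fun z => ENNReal.ofReal |f z|
  have : IsFiniteMeasure ν := isFiniteMeasure_withDensity_ofReal hf.abs.2
  have hνuniv : ν Set.univ = ENNReal.ofReal (∫ x, |f x| ∂μ) := by
    rw [withDensity_apply _ MeasurableSet.univ, Measure.restrict_univ,
      ofReal_integral_eq_lintegral_ofReal hf.abs (.of_forall fun x => abs_nonneg _)]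
  choose! y s hys hlt using fun x (hx : ENNReal.ofReal lam < locMaxFn μ R β f x) =>
    exists_ball_of_lt_locMaxFn hx
  simp only [← withDensity_apply _ measurableSet_ball, ← neg_sub 1 β] at hlt
  have hp : 1 ≤ 1 / (1 - β) := by rw [le_div_iff₀ (by linarith)]; linarith
  calc _ ≤ ENNReal.ofReal C_D ^ 3 *
          ((ENNReal.ofReal lam)⁻¹ * ν Set.univ) ^ (1 / (1 - β)) :=
        measure_le_mul_rpow_of_forall_mem_ball μ ν hp (fun x hx => (hys x hx).2.1)
          (fun x hx => (hys x hx).2.2)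
          (fun x hx =>
            measure_ball_eight_mul_le_of_doubling hdouble _ (hys x hx).1 (hys x hx).2.1)
          (fun x hx => right_ne_zero_of_mul (pos_of_gt (hlt x hx)).ne')
          fun x hx => by
            obtain ⟨hμ₀, hμ⟩ := hball (y x) (s x) (hys x hx).1
            rw [one_div]
            exact ENNReal.le_rpow_inv_of_lt_rpow_neg_mul (by linarith) hμ₀.ne' hμ.ne (hlt x hx)
    _ = _ := by
        rw [hνuniv, ← ENNReal.ofReal_inv_of_pos hlam, ← ENNReal.ofReal_mul (by positivity),
          ENNReal.ofReal_pow hCD.le]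
end
end

section
/- There exists a constant C > 0, depending only on C_D, such that for every locally integrable function f and every open ball B of radius t ∈ (0,1], for μ-almost every y ∈ B one has |f(y) - f_B| ≤ C ∫₀^{8t} Ω_f(y,s) s^{-1} ds. -/
open MeasureTheory Metric ENNReal

noncomputable section

/-- The local oscillation functional
`Ω_f(y,s) = sup { μ(B')⁻¹ ∫_{B'} |f - f_{B'}| dμ : B' ball of radius ≤ s, y ∈ B' }`. -/
def oscLoc {X : Type*} [MetricSpace X] [MeasurableSpace X] (μ : Measure X)
    (f : X → ℝ) (y : X) (s : ℝ) : ℝ≥0∞ :=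
  ⨆ (z : X) (t : ℝ) (_ : 0 < t ∧ t ≤ s ∧ y ∈ ball z t),
    (μ (ball z t))⁻¹ *
      ∫⁻ w in ball z t, ENNReal.ofReal |f w - ⨍ v in ball z t, f v ∂μ| ∂μ

/-! At a Lebesgue point `y` the averages of `f` over `closedBall y (t / 2 ^ k)` tend to `f y`
(local doubling makes `μ` uniformly locally doubling, so Lebesgue differentiation applies).
Two consecutive averages, and likewise the first one and `f_B`, are averages over subsets of a
ball `ball y (2 t / 2 ^ k)` of comparable measure, so they differ by at most a multiple of the
mean oscillation on that ball, hence by a multiple of `Ω_f(y, 2 t / 2 ^ k)`. Summing the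
telescoping series and using `Ω_f(y, r) ≤ 2 ∫_r^{2r} Ω_f(y, s) s⁻¹ ds` (monotonicity of
`Ω_f(y, ·)`) on the disjoint dyadic intervals `(2 t / 2 ^ k, 4 t / 2 ^ k)` gives the bound. -/

open Filter Topology

section MeanOscillation

variable {X : Type*} [MeasurableSpace X] {μ : Measure X} {f : X → ℝ} {A B : Set X}

def meanOsc (μ : Measure X) (f : X → ℝ) (B : Set X) : ℝ≥0∞ :=
  (μ B)⁻¹ * ∫⁻ w in B, ENNReal.ofReal |f w - ⨍ v in B, f v ∂μ| ∂μ

theorem enorm_setAverage_le {E : Type*} [NormedAddCommGroup E] [NormedSpace ℝ E] (g : X → E)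
    (A : Set X) : ‖⨍ x in A, g x ∂μ‖ₑ ≤ (μ A)⁻¹ * ∫⁻ x in A, ‖g x‖ₑ ∂μ := by
  rw [average_eq', Measure.restrict_apply_univ]
  exact (enorm_integral_le_lintegral_enorm _).trans_eq
    (by rw [lintegral_smul_measure, smul_eq_mul])

theorem meanOsc_eq_top_of_not_integrableOn (hB : μ B ≠ ⊤)
    (hf : AEStronglyMeasurable f (μ.restrict B)) (hfB : ¬IntegrableOn f B μ) :
    meanOsc μ f B = ⊤ := by
  have havg : ⨍ v in B, f v ∂μ = 0 := by rw [setAverage_eq, integral_undef hfB, smul_zero]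
  have hlint : ∫⁻ w in B, ‖f w‖ₑ ∂μ = ⊤ := not_lt_top.1 fun h => hfB ⟨hf, h⟩
  simp only [meanOsc, havg, sub_zero, ← Real.enorm_eq_ofReal_abs, hlint]
  exact ENNReal.mul_top (ENNReal.inv_ne_zero.2 hB)

theorem edist_setAverage_le_mul_meanOsc {K : ℝ≥0∞} (hAB : A ⊆ B) (hK : μ B ≤ K * μ A)
    (hA : μ A ≠ 0) (hB : μ B ≠ ⊤) (hf : AEStronglyMeasurable f (μ.restrict B)) :
    edist (⨍ v in A, f v ∂μ) (⨍ v in B, f v ∂μ) ≤ K * meanOsc μ f B := by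
  have hB0 : μ B ≠ 0 := fun h => hA (measure_mono_null hAB h)
  by_cases hfB : IntegrableOn f B μ
  swap
  · have hK0 : K ≠ 0 := by rintro rfl; simp_all
    rw [meanOsc_eq_top_of_not_integrableOn hB hf hfB, ENNReal.mul_top hK0]
    exact le_top
  set c := ⨍ v in B, f v ∂μ
  have hAt : μ A ≠ ⊤ := ne_top_of_le_ne_top hB (measure_mono hAB)
  have hsub : ⨍ v in A, (f v - c) ∂μ = (⨍ v in A, f v ∂μ) - c := by
    rw [setAverage_eq, integral_sub (hfB.mono_set hAB) (integrableOn_const hAt), smul_sub,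
      ← setAverage_eq, ← setAverage_eq, setAverage_const hA hAt]
  have hinv : (μ A)⁻¹ ≤ K * (μ B)⁻¹ := by
    rw [← div_eq_mul_inv, ENNReal.le_div_iff_mul_le (Or.inl hB0) (Or.inl hB), mul_comm]
    exact ENNReal.div_le_of_le_mul hK
  calc edist (⨍ v in A, f v ∂μ) c = ‖⨍ v in A, (f v - c) ∂μ‖ₑ := by
        rw [hsub, edist_eq_enorm_sub]
    _ ≤ (μ A)⁻¹ * ∫⁻ w in A, ‖f w - c‖ₑ ∂μ := enorm_setAverage_le _ A
    _ ≤ (K * (μ B)⁻¹) * ∫⁻ w in B, ‖f w - c‖ₑ ∂μ := by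
        gcongr ?_ * ?_
        exact lintegral_mono_set hAB
    _ = K * meanOsc μ f B := by
        simp only [meanOsc, c, Real.enorm_eq_ofReal_abs, mul_assoc]

theorem edist_setAverage_le_add_mul_meanOsc {A₁ A₂ : Set X} {K₁ K₂ : ℝ≥0∞}
    (h₁ : A₁ ⊆ B) (h₂ : A₂ ⊆ B) (hK₁ : μ B ≤ K₁ * μ A₁) (hK₂ : μ B ≤ K₂ * μ A₂)
    (hA₁ : μ A₁ ≠ 0) (hA₂ : μ A₂ ≠ 0) (hB : μ B ≠ ⊤)
    (hf : AEStronglyMeasurable f (μ.restrict B)) :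
    edist (⨍ v in A₁, f v ∂μ) (⨍ v in A₂, f v ∂μ) ≤ (K₁ + K₂) * meanOsc μ f B :=
  calc _ ≤ edist (⨍ v in A₁, f v ∂μ) (⨍ v in B, f v ∂μ)
        + edist (⨍ v in A₂, f v ∂μ) (⨍ v in B, f v ∂μ) := edist_triangle_right _ _ _
    _ ≤ K₁ * meanOsc μ f B + K₂ * meanOsc μ f B :=
        add_le_add (edist_setAverage_le_mul_meanOsc h₁ hK₁ hA₁ hB hf)
          (edist_setAverage_le_mul_meanOsc h₂ hK₂ hA₂ hB hf)
    _ = (K₁ + K₂) * meanOsc μ f B := (add_mul _ _ _).symm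

end MeanOscillation

section LocalOscillation

variable {X : Type*} [MetricSpace X] [MeasurableSpace X] {μ : Measure X} {f : X → ℝ}

theorem meanOsc_ball_le_oscLoc {x y : X} {r s : ℝ} (hr : 0 < r) (hrs : r ≤ s)
    (hy : y ∈ ball x r) : meanOsc μ f (ball x r) ≤ oscLoc μ f y s :=
  le_iSup_of_le x <| le_iSup_of_le r <| le_iSup_of_le ⟨hr, hrs, hy⟩ le_rfl

theorem monotone_oscLoc (y : X) : Monotone (oscLoc μ f y) := fun _ _ h =>
  iSup_le fun _ => iSup_le fun _ => iSup_le fun hr =>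
    meanOsc_ball_le_oscLoc hr.1 (hr.2.1.trans h) hr.2.2

end LocalOscillation

theorem le_two_mul_setLIntegral_Ioo {φ : ℝ → ℝ≥0∞} (hφ : Monotone φ) {b : ℝ}
    (hb : 0 < b) :
    φ b ≤ 2 * ∫⁻ s in Set.Ioo b (2 * b), φ s * ENNReal.ofReal s⁻¹ := by
  have hhalf : ENNReal.ofReal (2 * b)⁻¹ * ENNReal.ofReal (2 * b - b) = 2⁻¹ := by
    rw [← ENNReal.ofReal_mul (by positivity),
      show (2 * b)⁻¹ * (2 * b - b) = 2⁻¹ by field_simp; ring,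
      ENNReal.ofReal_inv_of_pos two_pos, ENNReal.ofReal_ofNat]
  calc φ b = 2 * ((φ b * ENNReal.ofReal (2 * b)⁻¹) * ENNReal.ofReal (2 * b - b)) := by
        rw [mul_assoc, hhalf, mul_left_comm, ENNReal.mul_inv_cancel two_ne_zero ofNat_ne_top,
          mul_one]
    _ = 2 * ∫⁻ _ in Set.Ioo b (2 * b), φ b * ENNReal.ofReal (2 * b)⁻¹ := by
        rw [setLIntegral_const, Real.volume_Ioo]
    _ ≤ 2 * ∫⁻ s in Set.Ioo b (2 * b), φ s * ENNReal.ofReal s⁻¹ := by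
        gcongr 2 * ?_
        refine setLIntegral_mono' measurableSet_Ioo fun s hs => ?_
        gcongr
        · exact hφ hs.1.le
        · exact hb.trans hs.1
        · exact hs.2.le

theorem tsum_le_two_mul_setLIntegral_Ioo {φ : ℝ → ℝ≥0∞} (hφ : Monotone φ) {a : ℝ}
    (ha : 0 < a) :
    ∑' k : ℕ, φ (a / 2 ^ k) ≤ 2 * ∫⁻ s in Set.Ioo 0 (2 * a), φ s * ENNReal.ofReal s⁻¹ := by
  have hanti : Antitone fun k : ℕ => 2 * a / 2 ^ k := fun i j hij =>
    div_le_div_of_nonneg_left (by positivity) (by positivity) (pow_le_pow_right₀ one_le_two hij)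
  have hsucc : ∀ k : ℕ, 2 * a / 2 ^ (k + 1) = a / 2 ^ k := fun k => by
    rw [pow_succ]; field_simp
  calc ∑' k : ℕ, φ (a / 2 ^ k)
      ≤ ∑' k : ℕ, 2 * ∫⁻ s in Set.Ioo (a / 2 ^ k) (2 * (a / 2 ^ k)),
          φ s * ENNReal.ofReal s⁻¹ :=
        ENNReal.tsum_le_tsum fun k => le_two_mul_setLIntegral_Ioo hφ (by positivity)
    _ = 2 * ∫⁻ s in ⋃ k : ℕ, Set.Ioo (2 * a / 2 ^ (k + 1)) (2 * a / 2 ^ k),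
          φ s * ENNReal.ofReal s⁻¹ := by
        rw [ENNReal.tsum_mul_left, lintegral_iUnion (fun _ => measurableSet_Ioo)
          (by simpa only [Order.succ_eq_add_one] using hanti.pairwise_disjoint_on_Ioo_succ)]
        simp only [hsucc, mul_div_assoc]
    _ ≤ 2 * ∫⁻ s in Set.Ioo 0 (2 * a), φ s * ENNReal.ofReal s⁻¹ := by
        gcongr 2 * ?_
        refine lintegral_mono_set (Set.iUnion_subset fun k => Set.Ioo_subset_Ioo ?_ ?_)
        · positivity
        · exact div_le_self (by positivity) (one_le_pow₀ one_le_two)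

section Doubling

variable {X : Type*} [MetricSpace X] [MeasurableSpace X] {μ : Measure X} {D : ℝ≥0∞} {R : ℝ}

def IsDoublingBelow (μ : Measure X) (D : ℝ≥0∞) (R : ℝ) : Prop :=
  ∀ (y : X) (s : ℝ), 0 < s → s ≤ R → μ (ball y (2 * s)) ≤ D * μ (ball y s)

namespace IsDoublingBelow

theorem measure_ball_four_mul_le (hD : IsDoublingBelow μ D R) (y : X) {s : ℝ} (hs : 0 < s)
    (hsR : 2 * s ≤ R) : μ (ball y (4 * s)) ≤ D ^ 2 * μ (ball y s) :=
  calc μ (ball y (4 * s)) = μ (ball y (2 * (2 * s))) := by ring_nf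
    _ ≤ D * (D * μ (ball y s)) := by
        grw [hD y (2 * s) (by positivity) hsR, hD y s hs (by linarith)]
    _ = D ^ 2 * μ (ball y s) := by ring

theorem measure_ball_two_mul_le_closedBall (hD : IsDoublingBelow μ D R) (y : X) {s : ℝ}
    (hs : 0 < s) (hsR : s ≤ R) : μ (ball y (2 * s)) ≤ D * μ (closedBall y s) := by
  grw [hD y s hs hsR, ball_subset_closedBall]

theorem isUnifLocDoublingMeasure {D : NNReal} (hD : IsDoublingBelow μ D R) (hR : 0 < R) :
    IsUnifLocDoublingMeasure μ := by
  refine ⟨D ^ 2, ?_⟩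
  filter_upwards [Ioc_mem_nhdsGT (half_pos hR)] with ε ⟨hε, hεR⟩ x
  calc μ (closedBall x (2 * ε)) ≤ μ (ball x (4 * ε)) :=
        measure_mono (closedBall_subset_ball (by linarith))
    _ ≤ (D : ℝ≥0∞) ^ 2 * μ (ball x ε) := hD.measure_ball_four_mul_le x hε (by linarith)
    _ ≤ ((D ^ 2 : NNReal) : ℝ≥0∞) * μ (closedBall x ε) := by
        grw [ball_subset_closedBall]; push_cast; rfl

end IsDoublingBelow

end Doubling

section Pointwise

variable {X : Type*} [MetricSpace X] [MeasurableSpace X] {μ : Measure X} {f : X → ℝ}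
  {D : ℝ≥0∞} {R : ℝ}

theorem edist_setAverage_closedBall_half_le
    (hball : ∀ (x : X) (r : ℝ), 0 < r → 0 < μ (ball x r) ∧ μ (ball x r) < ⊤)
    (hD : IsDoublingBelow μ D R) (hf : AEStronglyMeasurable f μ) (y : X) {ρ : ℝ} (hρ : 0 < ρ)
    (hρR : ρ ≤ R) :
    edist (⨍ v in closedBall y ρ, f v ∂μ) (⨍ v in closedBall y (ρ / 2), f v ∂μ)
      ≤ (D + D ^ 2) * oscLoc μ f y (2 * ρ) := by
  have hμ : ∀ r, 0 < r → μ (closedBall y r) ≠ 0 := fun r hr =>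
    ((measure_mono ball_subset_closedBall).trans_lt' (hball y r hr).1).ne'
  have hquad : μ (ball y (2 * ρ)) ≤ D ^ 2 * μ (closedBall y (ρ / 2)) := by
    calc μ (ball y (2 * ρ)) = μ (ball y (4 * (ρ / 2))) := by ring_nf
      _ ≤ D ^ 2 * μ (ball y (ρ / 2)) := hD.measure_ball_four_mul_le y (half_pos hρ) (by linarith)
      _ ≤ D ^ 2 * μ (closedBall y (ρ / 2)) := by grw [ball_subset_closedBall]
  grw [← meanOsc_ball_le_oscLoc (by positivity) le_rfl (mem_ball_self (by positivity))]
  exact edist_setAverage_le_add_mul_meanOsc (closedBall_subset_ball (by linarith))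
    (closedBall_subset_ball (by linarith)) (hD.measure_ball_two_mul_le_closedBall y hρ hρR)
    hquad (hμ ρ hρ) (hμ _ (half_pos hρ)) (hball y _ (by positivity)).2.ne hf.restrict

theorem edist_setAverage_closedBall_ball_le
    (hball : ∀ (x : X) (r : ℝ), 0 < r → 0 < μ (ball x r) ∧ μ (ball x r) < ⊤)
    (hD : IsDoublingBelow μ D R) (hf : AEStronglyMeasurable f μ) {y z : X} {t : ℝ} (ht : 0 < t)
    (htR : 2 * t ≤ R) (hy : y ∈ ball z t) :
    edist (⨍ v in closedBall y t, f v ∂μ) (⨍ v in ball z t, f v ∂μ)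
      ≤ (D + D ^ 2) * oscLoc μ f y (2 * t) := by
  have hyz := mem_ball.1 hy
  have hquad : μ (ball y (2 * t)) ≤ D ^ 2 * μ (ball z t) := by
    grw [← hD.measure_ball_four_mul_le z ht htR]
    exact measure_mono (ball_subset_ball' (by linarith))
  grw [← meanOsc_ball_le_oscLoc (by positivity) le_rfl (mem_ball_self (by positivity))]
  exact edist_setAverage_le_add_mul_meanOsc (closedBall_subset_ball (by linarith))
    (ball_subset_ball' (by rw [dist_comm]; linarith))
    (hD.measure_ball_two_mul_le_closedBall y ht (by linarith)) hquad
    ((measure_mono ball_subset_closedBall).trans_lt' (hball y t ht).1).ne'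
    (hball z t ht).1.ne'
    (hball y _ (by positivity)).2.ne hf.restrict

theorem edist_le_mul_lintegral_oscLoc
    (hball : ∀ (x : X) (r : ℝ), 0 < r → 0 < μ (ball x r) ∧ μ (ball x r) < ⊤)
    (hD : IsDoublingBelow μ D R) (hf : AEStronglyMeasurable f μ) {y z : X} {t : ℝ} (ht : 0 < t)
    (htR : 2 * t ≤ R) (hy : y ∈ ball z t)
    (hlim : Tendsto (fun k : ℕ => ⨍ v in closedBall y (t / 2 ^ k), f v ∂μ)
      atTop (𝓝 (f y))) :
    edist (f y) (⨍ v in ball z t, f v ∂μ)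
      ≤ 4 * (D + D ^ 2) *
          ∫⁻ s in Set.Ioo 0 (4 * t), oscLoc μ f y s * ENNReal.ofReal s⁻¹ := by
  set g := fun k : ℕ => ⨍ v in closedBall y (t / 2 ^ k), f v ∂μ
  set φ := fun k : ℕ => oscLoc μ f y (2 * t / 2 ^ k)
  have hstep : ∀ k, edist (g k) (g (k + 1)) ≤ (D + D ^ 2) * φ k := fun k => by
    have hρR : t / 2 ^ k ≤ R :=
      (div_le_self ht.le (one_le_pow₀ one_le_two)).trans (by linarith)
    simpa only [g, φ, pow_succ, div_div, mul_div_assoc] using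
      edist_setAverage_closedBall_half_le hball hD hf y (by positivity) hρR
  have hfirst : edist (g 0) (⨍ v in ball z t, f v ∂μ) ≤ (D + D ^ 2) * φ 0 := by
    simpa only [g, φ, pow_zero, div_one] using
      edist_setAverage_closedBall_ball_le hball hD hf ht htR hy
  calc edist (f y) (⨍ v in ball z t, f v ∂μ)
      ≤ edist (g 0) (f y) + edist (g 0) (⨍ v in ball z t, f v ∂μ) :=
        edist_triangle_left _ _ _
    _ ≤ ∑' k, (D + D ^ 2) * φ k + (D + D ^ 2) * ∑' k, φ k := by
        gcongr
        · exact edist_le_tsum_of_edist_le_of_tendsto₀ _ hstep hlim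
        · exact hfirst.trans (by gcongr; exact ENNReal.le_tsum 0)
    _ = 2 * (D + D ^ 2) * ∑' k, φ k := by rw [ENNReal.tsum_mul_left]; ring
    _ ≤ 2 * (D + D ^ 2) * (2 * ∫⁻ s in Set.Ioo 0 (2 * (2 * t)),
          oscLoc μ f y s * ENNReal.ofReal s⁻¹) := by
        gcongr
        exact tsum_le_two_mul_setLIntegral_Ioo (monotone_oscLoc y) (by positivity)
    _ = 4 * (D + D ^ 2) * ∫⁻ s in Set.Ioo 0 (4 * t),
          oscLoc μ f y s * ENNReal.ofReal s⁻¹ := by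
        ring_nf

end Pointwise

theorem pointwise_bound_by_oscillation (C_D : ℝ) (hCD : 0 < C_D) :
    ∃ C : ℝ, 0 < C ∧
      ∀ (X : Type) [MetricSpace X] [CompleteSpace X]
        [TopologicalSpace.SeparableSpace X] [MeasurableSpace X] [BorelSpace X]
        (μ : Measure X) [IsLocallyFiniteMeasure μ],
        (∀ (x : X) (t : ℝ), 0 < t → 0 < μ (ball x t) ∧ μ (ball x t) < ⊤) →
        (∀ (y : X) (s : ℝ), 0 < s → s ≤ 16 →
          μ (ball y (2 * s)) ≤ ENNReal.ofReal C_D * μ (ball y s)) →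
        ∀ f : X → ℝ, LocallyIntegrable f μ →
        ∀ (z : X) (t : ℝ), 0 < t → t ≤ 1 →
          ∀ᵐ y ∂(μ.restrict (ball z t)),
            ENNReal.ofReal |f y - ⨍ v in ball z t, f v ∂μ|
              ≤ ENNReal.ofReal C *
                  ∫⁻ s in Set.Ioo (0 : ℝ) (8 * t),
                    oscLoc μ f y s * ENNReal.ofReal s⁻¹ := by
  refine ⟨4 * (C_D + C_D ^ 2), by positivity, ?_⟩
  intro X _ _ _ _ _ μ _ hball hdbl f hf z t ht ht1
  have hD : IsDoublingBelow μ (ENNReal.ofReal C_D) 16 := hdbl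
  have := UniformSpace.secondCountable_of_separable X
  have := hD.isUnifLocDoublingMeasure (D := C_D.toNNReal) (by norm_num)
  have hρ : Tendsto (fun k : ℕ => t / 2 ^ k) atTop (𝓝[>] 0) :=
    tendsto_nhdsWithin_of_tendsto_nhds_of_eventually_within _
      (tendsto_const_nhds.div_atTop (tendsto_pow_atTop_atTop_of_one_lt one_lt_two))
      (Eventually.of_forall fun k => Set.mem_Ioi.2 (by positivity))
  filter_upwards [ae_restrict_of_ae (IsUnifLocDoublingMeasure.ae_tendsto_average μ hf 1),
    ae_restrict_mem measurableSet_ball] with y hlim hy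
  have hC : ENNReal.ofReal (4 * (C_D + C_D ^ 2))
      = 4 * (ENNReal.ofReal C_D + ENNReal.ofReal C_D ^ 2) := by
    rw [ENNReal.ofReal_mul (by norm_num), ENNReal.ofReal_add hCD.le (by positivity),
      ENNReal.ofReal_pow hCD.le, ENNReal.ofReal_ofNat]
  rw [← Real.enorm_eq_ofReal_abs, ← edist_eq_enorm_sub, hC]
  refine (edist_le_mul_lintegral_oscLoc hball hD hf.aestronglyMeasurable ht (by linarith) hy
    (hlim (fun _ => y) _ hρ (.of_forall fun k => mem_closedBall_self (by positivity)))).trans ?_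
  gcongr
  norm_num
end
end
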